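/- arXiv:1111.5799 — 8 statements merged into one kernel-verified Lean document; each statement's English description precedes it below -/
import Mathlib

section
/- Let (X_t)_{t≥1} be an i.i.d. sequence of real random variables and suppose there exists r > 0 such that E[exp(r·X_1)] = 1. Then for every t ≥ 1 and every x ≥ 0, Pr( max_{1≤k≤t} Σ_{n=1}^k X_n > x ) ≤ exp(−r·x). -/
open MeasureTheory ProbabilityTheory Filter Finset
open scoped NNReal ENNReal

/-- **Kingman bound.** If `(X t)` (for `t ≥ 1`) is an i.i.d. sequence of real random
variables and `r > 0` satisfies `E[exp (r * X 1)] = 1`, then for every `t ≥ 1` and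
`x ≥ 0`, the probability that the maximum over `1 ≤ k ≤ t` of the partial sums
`∑_{n=1}^k X n` exceeds `x` is at most `exp (-r * x)`. -/
theorem kingman_bound
    {Ω : Type*} [MeasurableSpace Ω] (μ : Measure Ω) [IsProbabilityMeasure μ]
    (X : ℕ → Ω → ℝ)
    (hmeas : ∀ t, Measurable (X t))
    (hindep : iIndepFun X μ)
    (hident : ∀ i j, 1 ≤ i → 1 ≤ j → IdentDistrib (X i) (X j) μ μ)
    (r : ℝ) (hr : 0 < r)
    (hint : Integrable (fun ω => Real.exp (r * X 1 ω)) μ)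
    (hroot : ∫ ω, Real.exp (r * X 1 ω) ∂μ = 1) :
    ∀ t, ∀ (ht : 1 ≤ t), ∀ x : ℝ, 0 ≤ x →
      μ {ω | x < (Finset.Icc 1 t).sup' (Finset.nonempty_Icc.mpr ht)
          (fun k => ∑ n ∈ Finset.Icc 1 k, X n ω)}
        ≤ ENNReal.ofReal (Real.exp (-r * x)) := by
  intro t ht x hx
  have hg : Measurable (fun y : ℝ => Real.exp (r * y)) :=
    Real.measurable_exp.comp (measurable_const_mul r)
  set W : ℕ → Ω → ℝ := fun i => (fun y : ℝ => Real.exp (r * y)) ∘ X i with hWdef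
  have hWmeas : ∀ i, Measurable (W i) := fun i => hg.comp (hmeas i)
  have hWindep : iIndepFun W μ :=
    hindep.comp _ (fun _ => hg)
  have hWint : ∀ i, 1 ≤ i → Integrable (W i) μ := by
    intro i hi
    exact ((hident i 1 hi le_rfl).comp hg).integrable_iff.mpr hint
  have hWexp : ∀ i, 1 ≤ i → ∫ ω, W i ω ∂μ = 1 := by
    intro i hi
    rw [((hident i 1 hi le_rfl).comp hg).integral_eq]
    exact hroot
  -- the exponential martingale (as partial products)
  set P : ℕ → Ω → ℝ := fun n => ∏ i ∈ Finset.Icc 1 n, W i with hPdef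
  have hPapply : ∀ n ω, P n ω = ∏ i ∈ Finset.Icc 1 n, W i ω := by
    intro n ω; simp [hPdef]
  have hPsucc : ∀ n, P (n + 1) = P n * W (n + 1) := by
    intro n
    simp only [hPdef]
    rw [← Finset.insert_Icc_right_eq_Icc_add_one (by omega), Finset.prod_insert (by simp), mul_comm]
  have hPind : ∀ i : ℕ, IndepFun (P i) (W (i + 1)) μ := fun i =>
    hWindep.indepFun_finsetProd_of_notMem hWmeas (by simp)
  have hPkey : ∀ n, Integrable (P n) μ ∧ ∫ ω, P n ω ∂μ = 1 := by
    intro n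
    induction n with
    | zero =>
      constructor
      · have h0 : P 0 = fun _ : Ω => (1 : ℝ) := by
          funext ω; simp [hPapply]
        rw [h0]; exact integrable_const 1
      · have h0 : P 0 = fun _ : Ω => (1 : ℝ) := by
          funext ω; simp [hPapply]
        rw [h0]; simp
    | succ n ih =>
      have hi : Integrable (P n * W (n + 1)) μ :=
        (hPind n).integrable_mul ih.1 (hWint (n + 1) (by omega))
      constructor
      · rw [hPsucc n]; exact hi
      · rw [hPsucc n]
        have := (hPind n).integral_mul_eq_mul_integral ih.1.aestronglyMeasurable
          (hWint (n + 1) (by omega)).aestronglyMeasurable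
        calc ∫ ω, (P n * W (n + 1)) ω ∂μ
            = (∫ ω, P n ω ∂μ) * ∫ ω, W (n + 1) ω ∂μ := this
          _ = 1 := by rw [ih.2, hWexp (n + 1) (by omega), one_mul]
  have hPnonneg : ∀ n ω, 0 ≤ P n ω := by
    intro n ω
    rw [hPapply]
    exact Finset.prod_nonneg fun i _ => (Real.exp_pos _).le
  -- filtration
  have hZsm : ∀ j : ℕ, StronglyMeasurable (X (j + 1)) := fun j => (hmeas (j + 1)).stronglyMeasurable
  set ℱ := Filtration.natural (fun j => X (j + 1)) hZsm with hFdef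
  have hWsm : ∀ i k : ℕ, 1 ≤ i → i ≤ k + 1 → StronglyMeasurable[ℱ k] (W i) := by
    intro i k h1 h2
    have hX' : StronglyMeasurable[ℱ k] (X i) := by
      have h := (Filtration.stronglyAdapted_natural hZsm (i - 1)).mono (ℱ.mono (show i - 1 ≤ k by omega))
      simpa [Nat.sub_add_cancel h1] using h
    exact (Real.continuous_exp.comp (continuous_const.mul continuous_id)).comp_stronglyMeasurable hX'
  have hAdp : StronglyAdapted ℱ (fun k => P (k + 1)) := by
    intro k
    exact Finset.stronglyMeasurable_prod _
      (fun i hi => hWsm i k (Finset.mem_Icc.mp hi).1 (Finset.mem_Icc.mp hi).2)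
  -- independence of the increment from the past
  have hindep2 : ∀ k, Indep (MeasurableSpace.comap (W (k + 2)) inferInstance) (ℱ k) μ := by
    intro k
    have hd : Disjoint ({k + 2} : Set ℕ) {i | 1 ≤ i ∧ i ≤ k + 1} := by
      rw [Set.disjoint_left]
      rintro a rfl
      simp only [Set.mem_setOf_eq, not_and, not_le]
      omega
    have h := indep_iSup_of_disjoint (m := fun i => MeasurableSpace.comap (X i) inferInstance)
      (fun i => (hmeas i).comap_le) hindep hd
    have hle1 : MeasurableSpace.comap (W (k + 2)) inferInstance ≤
        ⨆ i ∈ ({k + 2} : Set ℕ), MeasurableSpace.comap (X i) inferInstance := by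
      rw [_root_.iSup_singleton]
      calc MeasurableSpace.comap (W (k + 2)) inferInstance
          = MeasurableSpace.comap (X (k + 2))
              (MeasurableSpace.comap (fun y : ℝ => Real.exp (r * y)) inferInstance) :=
            MeasurableSpace.comap_comp.symm
        _ ≤ MeasurableSpace.comap (X (k + 2)) inferInstance :=
            MeasurableSpace.comap_mono hg.comap_le
    have hle2 : (ℱ k : MeasurableSpace Ω) ≤
        ⨆ i ∈ {i | 1 ≤ i ∧ i ≤ k + 1}, MeasurableSpace.comap (X i) inferInstance := by
      refine iSup₂_le fun j hj => ?_
      exact le_iSup₂_of_le (j + 1) ⟨by omega, by omega⟩ le_rfl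
    exact indep_of_indep_of_le_right (indep_of_indep_of_le_left h hle1) hle2
  have hcond : ∀ k, μ[W (k + 2)|ℱ k] =ᵐ[μ] fun _ => (1 : ℝ) := by
    intro k
    have h := condExp_indep_eq ((hWmeas (k + 2)).comap_le) (ℱ.le k)
      (comap_measurable (W (k + 2))).stronglyMeasurable (hindep2 k)
    refine h.trans ?_
    rw [hWexp (k + 2) (by omega)]
  have hstep : ∀ k, P (k + 1) =ᵐ[μ] μ[P (k + 1 + 1)|ℱ k] := by
    intro k
    have hpull : μ[P (k + 1) * W (k + 2)|ℱ k] =ᵐ[μ] P (k + 1) * μ[W (k + 2)|ℱ k] :=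
      condExp_mul_of_stronglyMeasurable_left (hAdp k)
        (by rw [← hPsucc (k + 1)]; exact (hPkey (k + 2)).1)
        (hWint (k + 2) (by omega))
    rw [show k + 1 + 1 = k + 2 from rfl, hPsucc (k + 1)]
    refine EventuallyEq.symm (hpull.trans ?_)
    filter_upwards [hcond k] with ω hω
    simp [hω]
  have hmart : Martingale (fun k => P (k + 1)) ℱ μ :=
    martingale_nat hAdp (fun i => (hPkey (i + 1)).1) hstep
  have hnn : (0 : ℕ → Ω → ℝ) ≤ fun k => P (k + 1) := fun k ω => hPnonneg (k + 1) ω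
  set ε : ℝ≥0 := (Real.exp (r * x)).toNNReal with hεdef
  have hεcoe : (ε : ℝ) = Real.exp (r * x) := Real.coe_toNNReal _ (Real.exp_pos _).le
  have hmax := maximal_ineq hmart.submartingale hnn (ε := ε) (t - 1)
  set A := {ω | (ε : ℝ) ≤ (Finset.range (t - 1 + 1)).sup' Finset.nonempty_range_add_one
    fun k => P (k + 1) ω} with hAdef
  have hPexp : ∀ m ω, P m ω = Real.exp (r * ∑ n ∈ Finset.Icc 1 m, X n ω) := by
    intro m ω
    rw [hPapply, Finset.mul_sum, Real.exp_sum]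
    rfl
  have hsubset : {ω | x < (Finset.Icc 1 t).sup' (Finset.nonempty_Icc.mpr ht)
      (fun k => ∑ n ∈ Finset.Icc 1 k, X n ω)} ⊆ A := by
    intro ω hω
    rw [Set.mem_setOf_eq, Finset.lt_sup'_iff] at hω
    obtain ⟨k, hk, hxk⟩ := hω
    rw [Finset.mem_Icc] at hk
    show (ε : ℝ) ≤ _
    refine le_trans ?_ (Finset.le_sup' (fun j => P (j + 1) ω)
      (Finset.mem_range.mpr (show k - 1 < t - 1 + 1 by omega)))
    have hPk : P (k - 1 + 1) ω = Real.exp (r * ∑ n ∈ Finset.Icc 1 k, X n ω) := by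
      rw [Nat.sub_add_cancel hk.1, hPexp]
    rw [hPk, hεcoe]
    exact Real.exp_le_exp.mpr (mul_le_mul_of_nonneg_left hxk.le hr.le)
  have h1 : ENNReal.ofReal (∫ ω in A, P (t - 1 + 1) ω ∂μ) ≤ 1 := by
    have htt : t - 1 + 1 = t := by omega
    rw [htt]
    refine le_trans (ENNReal.ofReal_le_ofReal (setIntegral_le_integral (hPkey t).1
      (Eventually.of_forall fun ω => hPnonneg t ω))) ?_
    rw [(hPkey t).2]
    simp
  have h2 : (ε : ℝ≥0∞) * μ A ≤ 1 := by
    refine le_trans ?_ (le_trans hmax h1)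
    exact le_rfl
  have h3 : μ A ≤ (ε : ℝ≥0∞)⁻¹ :=
    ENNReal.le_inv_iff_mul_le.mpr (by rwa [mul_comm])
  have h4 : ((ε : ℝ≥0∞))⁻¹ = ENNReal.ofReal (Real.exp (-r * x)) := by
    have : (ε : ℝ≥0∞) = ENNReal.ofReal (Real.exp (r * x)) := by
      rw [ENNReal.ofReal, hεdef]
    rw [this, ← ENNReal.ofReal_inv_of_pos (Real.exp_pos _), ← Real.exp_neg, neg_mul]
  refine le_trans (measure_mono hsubset) ?_
  rw [← h4]
  exact h3
end

section
/- Let (z_t)_{t≥1} be nonnegative real numbers and P > 0. Define s_0 = 0 and s_t = s_{t−1} + z_t − P·1{s_{t−1} ≥ P}; define g_0 = 0 and g_t = max(g_{t−1} + z_t − P, 0); define g'_0 = P and, for t ≥ 1, g'_t = s_t if s_{t−1} < P and s_t ≥ P, and g'_t = g'_{t−1} otherwise. Then s_t ≤ g_t + g'_t for every t ≥ 0. -/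
/-- For nonnegative energy arrivals `z t` and transmission power `P > 0`, the
infinite-capacity battery level `s` defined by `s 0 = 0` and
`s t = s (t-1) + z t - P·1{s (t-1) ≥ P}` is bounded above by `g t + g' t`, where
`g 0 = 0`, `g t = max (g (t-1) + (z t - P)) 0`, and `g' 0 = P`, `g' t = s t` if the
level crosses `P` from below at time `t` (i.e. `s (t-1) < P` and `s t ≥ P`) and
`g' t = g' (t-1)` otherwise. -/
theorem battery_level_upper_bound
    (z : ℕ → ℝ) (hz : ∀ t, 1 ≤ t → 0 ≤ z t)
    (P : ℝ) (hP : 0 < P)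
    (s g g' : ℕ → ℝ)
    (hs0 : s 0 = 0)
    (hs : ∀ t : ℕ, s (t + 1) = s t + z (t + 1) - (if P ≤ s t then P else 0))
    (hg0 : g 0 = 0)
    (hg : ∀ t : ℕ, g (t + 1) = max (g t + (z (t + 1) - P)) 0)
    (hg'0 : g' 0 = P)
    (hg' : ∀ t : ℕ, g' (t + 1) =
      if s t < P ∧ P ≤ s (t + 1) then s (t + 1) else g' t) :
    ∀ t : ℕ, s t ≤ g t + g' t := by
  have hgnn : ∀ t, 0 ≤ g t := by
    intro t
    cases t with
    | zero => simp [hg0]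
    | succ n => rw [hg]; exact le_max_right _ _
  have hg'P : ∀ t, P ≤ g' t := by
    intro t
    induction t with
    | zero => simp [hg'0]
    | succ n ih =>
      rw [hg']
      split
      · exact (by tauto : P ≤ s (n + 1))
      · exact ih
  intro t
  induction t with
  | zero => rw [hs0, hg0, hg'0]; linarith
  | succ n ih =>
    rw [hs, hg, hg']
    by_cases h1 : P ≤ s n
    · have : ¬ (s n < P ∧ P ≤ s (n + 1)) := by
        intro h; exact absurd h.1 (not_lt.mpr h1)
      rw [if_pos h1, if_neg this]
      have := le_max_left (g n + (z (n + 1) - P)) 0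
      linarith
    · rw [if_neg h1]
      by_cases h2 : P ≤ s (n + 1)
      · rw [if_pos ⟨not_le.mp h1, h2⟩, hs, if_neg h1]
        have := le_max_right (g n + (z (n + 1) - P)) 0
        linarith
      · rw [if_neg (by tauto)]
        have hs1 : s (n + 1) < P := not_le.mp h2
        rw [hs, if_neg h1] at hs1
        have := le_max_right (g n + (z (n + 1) - P)) 0
        have := hg'P n
        linarith
end

section
/- Assume λ_e < P and that there exists r* > 0 with E[exp(r*·(Z_1 − P))] = 1. Then for every t ≥ 0 and every real x, Pr(S_t > x) ≤ 2·exp(−(r*/2)·(x − 2P)). -/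
open MeasureTheory ProbabilityTheory Filter Finset

/-- Reflected random walk functional: `batG P t f = max over suffixes of partial sums of
`f i - P` for `i` from `k+1` to `t`, defined recursively. -/
noncomputable def batG (P : ℝ) : ℕ → (ℕ → ℝ) → ℝ
  | 0, _ => 0
  | (t+1), f => max 0 (batG P t f + (f (t+1) - P))

lemma batG_nonneg (P : ℝ) (t : ℕ) (f : ℕ → ℝ) : 0 ≤ batG P t f := by
  cases t with
  | zero => simp [batG]
  | succ t => exact le_max_left _ _

lemma batG_measurable (P : ℝ) (t : ℕ) : Measurable (batG P t) := by
  induction t with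
  | zero => simpa [batG] using measurable_const
  | succ t ih =>
      have : Measurable fun f : ℕ → ℝ => max 0 (batG P t f + (f (t+1) - P)) :=
        measurable_const.max (ih.add ((measurable_pi_apply (t+1)).sub measurable_const))
      simpa [batG] using this

lemma batG_congr (P : ℝ) (t : ℕ) (f g : ℕ → ℝ) (h : ∀ i, i ≤ t → f i = g i) :
    batG P t f = batG P t g := by
  induction t with
  | zero => simp [batG]
  | succ t ih =>
      simp only [batG]
      rw [ih (fun i hi => h i (hi.trans (Nat.le_succ t))), h (t+1) le_rfl]

/-- Key step: if `A` has exponential tail with exponent `r`, and `W` is independent of `A`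
with `E[e^{rW}] = 1`, then `A + W` has the same exponential tail bound. -/
lemma tail_add {Ω : Type*} [MeasurableSpace Ω] (μ : Measure Ω) [IsProbabilityMeasure μ]
    (A W : Ω → ℝ) (hA : Measurable A) (hW : Measurable W) (hAW : IndepFun A W μ)
    (r : ℝ)
    (hexp : Integrable (fun ω => Real.exp (r * W ω)) μ)
    (hroot : ∫ ω, Real.exp (r * W ω) ∂μ = 1)
    (htail : ∀ u : ℝ, μ {ω | u < A ω} ≤ ENNReal.ofReal (Real.exp (-(r * u))))
    (u : ℝ) :
    μ {ω | u < A ω + W ω} ≤ ENNReal.ofReal (Real.exp (-(r * u))) := by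
  have hs : MeasurableSet {p : ℝ × ℝ | u < p.1 + p.2} :=
    measurableSet_lt measurable_const (measurable_fst.add measurable_snd)
  have hmapA : ∀ v : ℝ, (μ.map A) {a | v < a} = μ {ω | v < A ω} := by
    intro v
    rw [Measure.map_apply hA (show MeasurableSet {a : ℝ | v < a} from measurableSet_Ioi)]
    rfl
  have hmeasExp : Measurable fun w : ℝ => ENNReal.ofReal (Real.exp (r * w)) :=
    (Real.measurable_exp.comp (measurable_const.mul measurable_id)).ennreal_ofReal
  calc μ {ω | u < A ω + W ω}
      = μ.map (fun ω => (W ω, A ω)) {p : ℝ × ℝ | u < p.1 + p.2} := by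
        rw [Measure.map_apply (hW.prodMk hA) hs]
        congr 1
        ext ω
        simp [add_comm]
    _ = ((μ.map W).prod (μ.map A)) {p : ℝ × ℝ | u < p.1 + p.2} := by
        rw [(indepFun_iff_map_prod_eq_prod_map_map hW.aemeasurable hA.aemeasurable).mp hAW.symm]
    _ = ∫⁻ w, (μ.map A) {a | u - w < a} ∂(μ.map W) := by
        rw [Measure.prod_apply hs]
        congr 1
        funext w
        congr 1
        ext a
        simp [sub_lt_iff_lt_add']
    _ ≤ ∫⁻ w, ENNReal.ofReal (Real.exp (-(r * u)) * Real.exp (r * w)) ∂(μ.map W) := by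
        refine lintegral_mono fun w => ?_
        rw [hmapA]
        refine (htail (u - w)).trans (le_of_eq ?_)
        rw [← Real.exp_add]
        ring_nf
    _ = ENNReal.ofReal (Real.exp (-(r * u))) *
          ∫⁻ w, ENNReal.ofReal (Real.exp (r * w)) ∂(μ.map W) := by
        simp_rw [ENNReal.ofReal_mul (Real.exp_pos _).le]
        rw [lintegral_const_mul _ hmeasExp]
    _ = ENNReal.ofReal (Real.exp (-(r * u))) *
          ENNReal.ofReal (∫ ω, Real.exp (r * W ω) ∂μ) := by
        rw [lintegral_map hmeasExp hW,
          ← ofReal_integral_eq_lintegral_ofReal hexp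
            (Eventually.of_forall fun ω => (Real.exp_pos _).le)]
    _ = ENNReal.ofReal (Real.exp (-(r * u))) := by
        rw [hroot]; simp

/-- Tail bound on the infinite-capacity battery level: if the energy-arrival rate
`λe = E[Z 1]` satisfies `λe < P` and `r* > 0` is a positive root of the cumulant
generating function of `Z 1 - P`, then for every `t` and every real `x`,
`Pr(S t > x) ≤ 2 exp(-(r*/2)(x - 2P))`. -/
theorem battery_level_tail_bound
    {Ω : Type*} [MeasurableSpace Ω] (μ : Measure Ω) [IsProbabilityMeasure μ]
    (Z : ℕ → Ω → ℝ)
    (hmeas : ∀ t, Measurable (Z t))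
    (hindep : iIndepFun Z μ)
    (hident : ∀ i j, 1 ≤ i → 1 ≤ j → IdentDistrib (Z i) (Z j) μ μ)
    (hnonneg : ∀ t ω, 0 ≤ Z t ω)
    (hZint : Integrable (Z 1) μ)
    (lamE P : ℝ) (hlamE : lamE = ∫ ω, Z 1 ω ∂μ) (hP : 0 < P)
    (hlt : lamE < P)
    (S : ℕ → Ω → ℝ)
    (hS0 : ∀ ω, S 0 ω = 0)
    (hS : ∀ t ω, S (t + 1) ω = S t ω + Z (t + 1) ω - (if P ≤ S t ω then P else 0))
    (rstar : ℝ) (hrstar : 0 < rstar)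
    (hint : Integrable (fun ω => Real.exp (rstar * (Z 1 ω - P))) μ)
    (hroot : ∫ ω, Real.exp (rstar * (Z 1 ω - P)) ∂μ = 1) :
    ∀ t : ℕ, ∀ x : ℝ,
      μ {ω | x < S t ω} ≤ ENNReal.ofReal (2 * Real.exp (-(rstar / 2) * (x - 2 * P))) := by
  classical
  -- the reflected walk M t ω
  set M : ℕ → Ω → ℝ := fun t ω => batG P t (fun i => Z i ω) with hM
  have hMmeas : ∀ t, Measurable (M t) := fun t =>
    (batG_measurable P t).comp (measurable_pi_lambda _ fun i => hmeas i)
  -- pathwise domination S t ≤ 2P + M t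
  have hSM : ∀ t ω, S t ω ≤ 2 * P + M t ω := by
    intro t
    induction t with
    | zero =>
        intro ω
        have h0 : M 0 ω = 0 := rfl
        rw [hS0 ω, h0]
        linarith
    | succ t ih =>
        intro ω
        have hrec : M (t+1) ω = max 0 (M t ω + (Z (t+1) ω - P)) := rfl
        have hmax1 : M t ω + (Z (t+1) ω - P) ≤ M (t+1) ω := by
          rw [hrec]; exact le_max_right _ _
        have hMnn : 0 ≤ M t ω := batG_nonneg P t _
        rw [hS t ω]
        by_cases hge : P ≤ S t ω
        · simp only [if_pos hge]
          have := ih ω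
          linarith
        · simp only [if_neg hge]
          push_neg at hge
          linarith
  -- independence of M t and Z (t+1)
  have hindepM : ∀ t, IndepFun (M t) (Z (t+1)) μ := by
    intro t
    have hdisj : Disjoint (Finset.range (t+1)) ({t+1} : Finset ℕ) := by
      simp [Finset.disjoint_singleton_right]
    have h := hindep.indepFun_finset (Finset.range (t+1)) {t+1} hdisj hmeas
    set g1 : ((Finset.range (t+1) : Finset ℕ) → ℝ) → ℝ :=
      fun v => batG P t (fun i => if h : i ∈ Finset.range (t+1) then v ⟨i, h⟩ else 0) with hg1
    set g2 : (({t+1} : Finset ℕ) → ℝ) → ℝ :=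
      fun v => v ⟨t+1, Finset.mem_singleton_self _⟩ with hg2
    have hg1m : Measurable g1 := by
      apply (batG_measurable P t).comp
      apply measurable_pi_lambda
      intro i
      by_cases hi : i ∈ Finset.range (t+1)
      · simpa [hi] using measurable_pi_apply (⟨i, hi⟩ : (Finset.range (t+1) : Finset ℕ))
      · simpa [hi] using (measurable_const :
          Measurable fun _ : ((Finset.range (t+1) : Finset ℕ) → ℝ) => (0 : ℝ))
    have hg2m : Measurable g2 := measurable_pi_apply _
    have hcomp := h.comp hg1m hg2m
    have e1 : (g1 ∘ fun a (i : (Finset.range (t+1) : Finset ℕ)) => Z i a) = M t := by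
      funext a
      simp only [Function.comp, hg1, hM]
      apply batG_congr
      intro i hi
      have : i ∈ Finset.range (t+1) := Finset.mem_range.mpr (Nat.lt_succ_of_le hi)
      simp [this]
    have e2 : (g2 ∘ fun a (i : (({t+1} : Finset ℕ) : Finset ℕ)) => Z i a) = Z (t+1) := by
      funext a; rfl
    rwa [e1, e2] at hcomp
  -- identical distribution facts for W = Z (t+1) - P
  have hWexp : ∀ t : ℕ,
      Integrable (fun ω => Real.exp (rstar * (Z (t+1) ω - P))) μ ∧
      ∫ ω, Real.exp (rstar * (Z (t+1) ω - P)) ∂μ = 1 := by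
    intro t
    have hid : IdentDistrib (Z (t+1)) (Z 1) μ μ := hident (t+1) 1 (Nat.le_add_left 1 t) le_rfl
    have hidc : IdentDistrib (fun ω => Real.exp (rstar * (Z (t+1) ω - P)))
        (fun ω => Real.exp (rstar * (Z 1 ω - P))) μ μ :=
      hid.comp (Real.measurable_exp.comp
        (measurable_const.mul (measurable_id.sub measurable_const)))
    exact ⟨hidc.integrable_iff.mpr hint, hidc.integral_eq.trans hroot⟩
  -- tail bound for M by induction
  have hMtail : ∀ t : ℕ, ∀ u : ℝ,
      μ {ω | u < M t ω} ≤ ENNReal.ofReal (Real.exp (-(rstar * u))) := by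
    intro t
    induction t with
    | zero =>
        intro u
        by_cases hu : u < 0
        · refine (prob_le_one).trans ?_
          rw [ENNReal.one_le_ofReal]
          exact Real.one_le_exp (by nlinarith)
        · have : {ω | u < M 0 ω} = (∅ : Set Ω) := by
            ext ω
            have h0 : M 0 ω = 0 := rfl
            simp [h0, hu]
          rw [this]
          simp
    | succ t ih =>
        intro u
        by_cases hu : u < 0
        · refine (prob_le_one).trans ?_
          rw [ENNReal.one_le_ofReal]
          exact Real.one_le_exp (by nlinarith)
        · push_neg at hu
          have hset : {ω | u < M (t+1) ω} = {ω | u < M t ω + (Z (t+1) ω - P)} := by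
            ext ω
            have hrec : M (t+1) ω = max 0 (M t ω + (Z (t+1) ω - P)) := rfl
            simp only [Set.mem_setOf_eq, hrec, lt_max_iff]
            constructor
            · rintro (h | h)
              · exact absurd h (not_lt.mpr hu)
              · exact h
            · exact Or.inr
          rw [hset]
          have hWmeas : Measurable fun ω => Z (t+1) ω - P :=
            (hmeas (t+1)).sub measurable_const
          have hIndepW : IndepFun (M t) (fun ω => Z (t+1) ω - P) μ := by
            have := (hindepM t).comp measurable_id
              ((measurable_id.sub measurable_const) : Measurable fun z : ℝ => z - P)
            exact this
          exact tail_add μ (M t) (fun ω => Z (t+1) ω - P) (hMmeas t) hWmeas hIndepW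
            rstar (hWexp t).1 (hWexp t).2 ih u
  -- conclude
  intro t x
  by_cases hx : x - 2 * P < 0
  · refine (prob_le_one).trans ?_
    rw [ENNReal.one_le_ofReal]
    have h1 : (1 : ℝ) ≤ Real.exp (-(rstar / 2) * (x - 2 * P)) :=
      Real.one_le_exp (by nlinarith)
    linarith
  · push_neg at hx
    have hsub : {ω | x < S t ω} ⊆ {ω | x - 2 * P < M t ω} := by
      intro ω hω
      have := hSM t ω
      simp only [Set.mem_setOf_eq] at hω ⊢
      linarith
    refine (measure_mono hsub).trans ((hMtail t (x - 2 * P)).trans ?_)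
    apply ENNReal.ofReal_le_ofReal
    have key : Real.exp (-(rstar * (x - 2 * P)))
        = Real.exp (-(rstar / 2) * (x - 2 * P)) * Real.exp (-(rstar / 2) * (x - 2 * P)) := by
      rw [← Real.exp_add]; ring_nf
    rw [key]
    have h1 : Real.exp (-(rstar / 2) * (x - 2 * P)) ≤ 1 :=
      Real.exp_le_one_iff.mpr (by nlinarith)
    nlinarith [Real.exp_pos (-(rstar / 2) * (x - 2 * P))]
end

section
/- Assume λ_e < P and that there exists r* > 0 with E[exp(r*·(Z_1 − P))] = 1. Then for every t ≥ 0 and every x > 0, the energy-overshoot function satisfies E[max(S_t − x, 0)] ≤ (4/r*)·exp(−(r*/2)·(x − 2P)). -/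
open MeasureTheory ProbabilityTheory Filter Finset

/-- The Lindley-type reflected random walk functional: `lind P t z` is the value at time `t`
of the recursion `L 0 = 0`, `L (t+1) = max 0 (L t + z (t+1) - P)`. -/
noncomputable def lind (P : ℝ) : ℕ → (ℕ → ℝ) → ℝ
  | 0, _ => 0
  | t+1, z => max 0 (lind P t z + z (t+1) - P)

lemma lind_nonneg (P : ℝ) (t : ℕ) (z : ℕ → ℝ) : 0 ≤ lind P t z := by
  cases t with
  | zero => exact le_of_eq rfl
  | succ t => exact le_max_left _ _

lemma lind_congr (P : ℝ) : ∀ (t : ℕ) (z z' : ℕ → ℝ), (∀ i ≤ t, z i = z' i) →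
    lind P t z = lind P t z'
  | 0, _, _, _ => rfl
  | t+1, z, z', h => by
    have h1 : lind P t z = lind P t z' :=
      lind_congr P t z z' (fun i hi => h i (Nat.le_succ_of_le hi))
    simp only [lind, h1, h (t+1) le_rfl]

lemma measurable_lind (P : ℝ) (t : ℕ) : Measurable (lind P t) := by
  induction t with
  | zero => exact measurable_const
  | succ t ih =>
    exact measurable_const.max ((ih.add (measurable_pi_apply (t+1))).sub measurable_const)

/-- Bound on the energy-overshoot function: if the energy-arrival rate
`λe = E[Z 1]` satisfies `λe < P` and `r* > 0` is a positive root of the cumulant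
generating function of `Z 1 - P`, then for every `t` and every `x > 0`,
`D_t(x) = E[max (S t - x) 0] ≤ (4/r*) exp(-(r*/2)(x - 2P))`. -/
theorem energy_overshoot_bound
    {Ω : Type*} [MeasurableSpace Ω] (μ : Measure Ω) [IsProbabilityMeasure μ]
    (Z : ℕ → Ω → ℝ)
    (hmeas : ∀ t, Measurable (Z t))
    (hindep : iIndepFun Z μ)
    (hident : ∀ i j, 1 ≤ i → 1 ≤ j → IdentDistrib (Z i) (Z j) μ μ)
    (hnonneg : ∀ t ω, 0 ≤ Z t ω)
    (hZint : Integrable (Z 1) μ)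
    (lamE P : ℝ) (hlamE : lamE = ∫ ω, Z 1 ω ∂μ) (hP : 0 < P)
    (hlt : lamE < P)
    (S : ℕ → Ω → ℝ)
    (hS0 : ∀ ω, S 0 ω = 0)
    (hS : ∀ t ω, S (t + 1) ω = S t ω + Z (t + 1) ω - (if P ≤ S t ω then P else 0))
    (rstar : ℝ) (hrstar : 0 < rstar)
    (hint : Integrable (fun ω => Real.exp (rstar * (Z 1 ω - P))) μ)
    (hroot : ∫ ω, Real.exp (rstar * (Z 1 ω - P)) ∂μ = 1) :
    ∀ t : ℕ, ∀ x : ℝ, 0 < x →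
      ∫ ω, max (S t ω - x) 0 ∂μ ≤ (4 / rstar) * Real.exp (-(rstar / 2) * (x - 2 * P)) := by
  classical
  -- the Lindley majorant process
  set L : ℕ → Ω → ℝ := fun t ω => lind P t (fun i => Z i ω) with hLdef
  have hLmeas : ∀ t, Measurable (L t) := by
    intro t
    exact (measurable_lind P t).comp (measurable_pi_lambda _ (fun i => hmeas i))
  have hLnonneg : ∀ t ω, 0 ≤ L t ω := fun t ω => lind_nonneg P t _
  have hLrec : ∀ t ω, L (t+1) ω = max 0 (L t ω + Z (t+1) ω - P) := fun t ω => rfl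
  have hL0 : ∀ ω, L 0 ω = 0 := fun ω => rfl
  -- pathwise bound S t ≤ 2P + L t
  have hSL : ∀ t ω, S t ω ≤ 2 * P + L t ω := by
    intro t
    induction t with
    | zero => intro ω; rw [hS0 ω, hL0 ω]; linarith
    | succ t ih =>
      intro ω
      have h1 := ih ω
      have h2 := hLnonneg t ω
      have h3 := hnonneg (t+1) ω
      have h4 : L t ω + Z (t+1) ω - P ≤ L (t+1) ω := by
        rw [hLrec t ω]; exact le_max_right _ _
      rw [hS t ω]
      by_cases hc : P ≤ S t ω
      · rw [if_pos hc]; linarith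
      · rw [if_neg hc]; push_neg at hc; linarith
  -- identically distributed exponentials
  have hexpident : ∀ t : ℕ,
      IdentDistrib (fun ω => Real.exp (rstar * (Z (t+1) ω - P)))
        (fun ω => Real.exp (rstar * (Z 1 ω - P))) μ μ := by
    intro t
    exact (hident (t+1) 1 (Nat.le_add_left 1 t) le_rfl).comp
      (Real.measurable_exp.comp ((measurable_id.sub_const P).const_mul rstar))
  have hexpint : ∀ t : ℕ,
      Integrable (fun ω => Real.exp (rstar * (Z (t+1) ω - P))) μ :=
    fun t => (hexpident t).integrable_iff.mpr hint
  have hexpeq : ∀ t : ℕ, ∫ ω, Real.exp (rstar * (Z (t+1) ω - P)) ∂μ = 1 :=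
    fun t => ((hexpident t).integral_eq).trans hroot
  -- independence of L t and Z (t+1)
  have hindLZ : ∀ t : ℕ, IndepFun (L t) (Z (t+1)) μ := by
    intro t
    have hdisj : Disjoint (Finset.range (t+1)) ({t+1} : Finset ℕ) := by
      simp [Finset.disjoint_singleton_right]
    have base := hindep.indepFun_finset (Finset.range (t+1)) {t+1} hdisj hmeas
    set φ : ((Finset.range (t+1) : Finset ℕ) → ℝ) → ℝ :=
      fun v => lind P t (fun i => if h : i ∈ Finset.range (t+1) then v ⟨i, h⟩ else 0) with hφdef
    set ψ : (({t+1} : Finset ℕ) → ℝ) → ℝ :=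
      fun v => v ⟨t+1, Finset.mem_singleton_self _⟩ with hψdef
    have hφm : Measurable φ := by
      apply (measurable_lind P t).comp
      apply measurable_pi_lambda
      intro i
      by_cases h : i ∈ Finset.range (t+1)
      · simp only [h, dif_pos]
        exact measurable_pi_apply _
      · simp only [h, dif_neg, not_false_iff]
        exact measurable_const
    have hψm : Measurable ψ := measurable_pi_apply _
    have key := base.comp hφm hψm
    have h1 : (φ ∘ fun a (i : (Finset.range (t+1) : Finset ℕ)) => Z i a) = L t := by
      funext a
      simp only [Function.comp_apply, hφdef, hLdef]
      apply lind_congr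
      intro i hi
      rw [dif_pos (Finset.mem_range.mpr (Nat.lt_succ_of_le hi))]
    have h2 : (ψ ∘ fun a (i : (({t+1} : Finset ℕ) : Finset ℕ)) => Z i a) = Z (t+1) := rfl
    rwa [h1, h2] at key
  -- tail bound for L t
  have htail : ∀ t : ℕ, ∀ y : ℝ,
      μ {ω | y ≤ L t ω} ≤ ENNReal.ofReal (Real.exp (-(rstar * y))) := by
    intro t
    induction t with
    | zero =>
      intro y
      by_cases hy : y ≤ 0
      · calc μ {ω | y ≤ L 0 ω} ≤ 1 := prob_le_one
          _ ≤ ENNReal.ofReal (Real.exp (-(rstar * y))) := by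
            rw [← ENNReal.ofReal_one]
            exact ENNReal.ofReal_le_ofReal (Real.one_le_exp (by nlinarith))
      · push_neg at hy
        have : {ω | y ≤ L 0 ω} = (∅ : Set Ω) := by
          ext ω; simp only [Set.mem_setOf_eq, Set.mem_empty_iff_false, iff_false, not_le, hL0 ω]
          exact hy
        rw [this, measure_empty]
        exact zero_le
    | succ t ih =>
      intro y
      by_cases hy : y ≤ 0
      · calc μ {ω | y ≤ L (t+1) ω} ≤ 1 := prob_le_one
          _ ≤ ENNReal.ofReal (Real.exp (-(rstar * y))) := by
            rw [← ENNReal.ofReal_one]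
            exact ENNReal.ofReal_le_ofReal (Real.one_le_exp (by nlinarith))
      · push_neg at hy
        set A : Set (ℝ × ℝ) := {p : ℝ × ℝ | y + P ≤ p.1 + p.2} with hAdef
        have hA : MeasurableSet A :=
          measurableSet_le measurable_const (measurable_fst.add measurable_snd)
        have hset : {ω | y ≤ L (t+1) ω} = (fun ω => (Z (t+1) ω, L t ω)) ⁻¹' A := by
          ext ω
          simp only [Set.mem_setOf_eq, Set.mem_preimage, hAdef, hLrec t ω, le_max_iff]
          constructor
          · rintro (h | h)
            · linarith
            · linarith
          · intro h; right; linarith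
        have hpairm : Measurable (fun ω => (Z (t+1) ω, L t ω)) :=
          (hmeas (t+1)).prodMk (hLmeas t)
        have hprod : μ.map (fun ω => (Z (t+1) ω, L t ω))
            = (μ.map (Z (t+1))).prod (μ.map (L t)) :=
          (indepFun_iff_map_prod_eq_prod_map_map (hmeas (t+1)).aemeasurable
            (hLmeas t).aemeasurable).mp (hindLZ t).symm
        have step1 : μ {ω | y ≤ L (t+1) ω}
            = ∫⁻ x, (μ.map (L t)) (Prod.mk x ⁻¹' A) ∂(μ.map (Z (t+1))) := by
          rw [hset, ← Measure.map_apply hpairm hA, hprod, Measure.prod_apply hA]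
        have hpre : ∀ x : ℝ, (μ.map (L t)) (Prod.mk x ⁻¹' A) = μ {ω | y + P - x ≤ L t ω} := by
          intro x
          have hpe : Prod.mk x ⁻¹' A = Set.Ici (y + P - x) := by
            ext l
            simp only [Set.mem_preimage, hAdef, Set.mem_setOf_eq, Set.mem_Ici]
            constructor <;> intro h <;> linarith
          rw [hpe, Measure.map_apply (hLmeas t) measurableSet_Ici]
          rfl
        -- the dominating exponential function
        set g : ℝ → ℝ := fun x => Real.exp (-(rstar * y)) * Real.exp (rstar * (x - P)) with hgdef
        have hgey : ∀ x : ℝ, Real.exp (-(rstar * (y + P - x))) = g x := by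
          intro x
          show Real.exp (-(rstar * (y + P - x)))
            = Real.exp (-(rstar * y)) * Real.exp (rstar * (x - P))
          rw [← Real.exp_add]
          ring_nf
        have hgint : Integrable g (μ.map (Z (t+1))) := by
          rw [integrable_map_measure
            (by
              apply Measurable.aestronglyMeasurable
              exact (Real.measurable_exp.comp ((measurable_id.sub_const P).const_mul rstar)).const_mul _)
            (hmeas (t+1)).aemeasurable]
          exact ((hexpint t).const_mul _)
        have hgval : ∫ x, g x ∂(μ.map (Z (t+1))) = Real.exp (-(rstar * y)) := by
          rw [integral_map (hmeas (t+1)).aemeasurable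
            (by
              apply Measurable.aestronglyMeasurable
              exact (Real.measurable_exp.comp ((measurable_id.sub_const P).const_mul rstar)).const_mul _)]
          simp only [hgdef]
          rw [integral_const_mul, hexpeq t, mul_one]
        calc μ {ω | y ≤ L (t+1) ω}
            = ∫⁻ x, (μ.map (L t)) (Prod.mk x ⁻¹' A) ∂(μ.map (Z (t+1))) := step1
          _ ≤ ∫⁻ x, ENNReal.ofReal (g x) ∂(μ.map (Z (t+1))) := by
              refine lintegral_mono fun x => ?_
              calc (Measure.map (L t) μ) (Prod.mk x ⁻¹' A)
                  = μ {ω | y + P - x ≤ L t ω} := hpre x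
                _ ≤ ENNReal.ofReal (Real.exp (-(rstar * (y + P - x)))) := ih _
                _ = ENNReal.ofReal (g x) := by rw [hgey x]
          _ = ENNReal.ofReal (∫ x, g x ∂(μ.map (Z (t+1)))) :=
              (ofReal_integral_eq_lintegral_ofReal hgint
                (ae_of_all _ (fun x => by positivity))).symm
          _ = ENNReal.ofReal (Real.exp (-(rstar * y))) := by rw [hgval]
  -- real-valued tail bound with halved exponent
  have h2tail : ∀ t : ℕ, ∀ y : ℝ,
      (μ {ω | y ≤ L t ω}).toReal ≤ Real.exp (-(rstar / 2) * y) := by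
    intro t y
    by_cases hy : y ≤ 0
    · apply ENNReal.toReal_le_of_le_ofReal (Real.exp_nonneg _)
      calc μ {ω | y ≤ L t ω} ≤ 1 := prob_le_one
        _ ≤ ENNReal.ofReal (Real.exp (-(rstar / 2) * y)) := by
          rw [← ENNReal.ofReal_one]
          exact ENNReal.ofReal_le_ofReal (Real.one_le_exp (by nlinarith))
    · push_neg at hy
      apply ENNReal.toReal_le_of_le_ofReal (Real.exp_nonneg _)
      calc μ {ω | y ≤ L t ω} ≤ ENNReal.ofReal (Real.exp (-(rstar * y))) := htail t y
        _ ≤ ENNReal.ofReal (Real.exp (-(rstar / 2) * y)) := by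
          apply ENNReal.ofReal_le_ofReal
          apply Real.exp_le_exp.mpr
          nlinarith
  -- final assembly
  intro t x hx
  set c : ℝ := Real.exp (-(rstar / 2) * (x - 2 * P)) with hcdef
  set G : Ω → ℝ := fun ω => max (L t ω + (2 * P - x)) 0 with hGdef
  have hGnn : ∀ ω, 0 ≤ G ω := fun ω => le_max_right _ _
  have hGm : Measurable G := ((hLmeas t).add_const _).max measurable_const
  -- integrability of L t
  have hZi : ∀ s : ℕ, Integrable (Z (s+1)) μ := by
    intro s
    exact ((hident (s+1) 1 (Nat.le_add_left 1 s) le_rfl).integrable_iff).mpr hZint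
  have hLint : ∀ s : ℕ, Integrable (L s) μ := by
    intro s
    induction s with
    | zero =>
      have : L 0 = fun _ => (0 : ℝ) := funext hL0
      rw [this]; exact integrable_const 0
    | succ s ih =>
      have hv : Integrable (fun ω => L s ω + Z (s+1) ω - P) μ :=
        (ih.add (hZi s)).sub (integrable_const P)
      apply hv.mono ((hLmeas (s+1)).aestronglyMeasurable)
      apply ae_of_all
      intro ω
      rw [hLrec s ω]
      rw [Real.norm_eq_abs, Real.norm_eq_abs, abs_of_nonneg (le_max_left _ _)]
      exact le_trans (max_le (abs_nonneg _) (le_abs_self _)) le_rfl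
  have hGint : Integrable G μ := by
    have hv : Integrable (fun ω => L t ω + (2 * P - x)) μ :=
      (hLint t).add (integrable_const _)
    apply hv.mono hGm.aestronglyMeasurable
    apply ae_of_all
    intro ω
    rw [Real.norm_eq_abs, Real.norm_eq_abs, abs_of_nonneg (hGnn ω)]
    exact le_trans (max_le (le_abs_self _) (abs_nonneg _)) le_rfl
  -- step 1 : compare with G
  have step1 : ∫ ω, max (S t ω - x) 0 ∂μ ≤ ∫ ω, G ω ∂μ := by
    apply integral_mono_of_nonneg (ae_of_all _ (fun ω => le_max_right _ _)) hGint
    apply ae_of_all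
    intro ω
    apply max_le_max _ le_rfl
    have := hSL t ω
    linarith
  -- step 2 : layer cake
  have step2 : ∫ ω, G ω ∂μ = ∫ s in Set.Ioi (0:ℝ), (μ {a | s < G a}).toReal :=
    hGint.integral_eq_integral_meas_lt (ae_of_all _ hGnn)
  -- step 3 : pointwise tail estimate
  have step3 : ∀ s : ℝ, 0 < s →
      (μ {a | s < G a}).toReal ≤ c * Real.exp (-(rstar / 2) * s) := by
    intro s hs
    have hsub : {a | s < G a} ⊆ {ω | s + (x - 2 * P) ≤ L t ω} := by
      intro a ha
      simp only [Set.mem_setOf_eq, hGdef, lt_max_iff] at ha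
      rcases ha with h | h
      · simp only [Set.mem_setOf_eq]; linarith
      · linarith
    have h1 : (μ {a | s < G a}).toReal ≤ (μ {ω | s + (x - 2 * P) ≤ L t ω}).toReal :=
      ENNReal.toReal_mono (measure_ne_top μ _) (measure_mono hsub)
    refine le_trans h1 (le_trans (h2tail t _) (le_of_eq ?_))
    rw [hcdef, ← Real.exp_add]
    ring_nf
  -- step 4 : integral comparison on Ioi 0
  have hBint : IntegrableOn (fun s => c * Real.exp (-(rstar / 2) * s)) (Set.Ioi (0:ℝ)) :=
    (exp_neg_integrableOn_Ioi 0 (by positivity : (0:ℝ) < rstar / 2)).const_mul c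
  have step4 : ∫ s in Set.Ioi (0:ℝ), (μ {a | s < G a}).toReal
      ≤ ∫ s in Set.Ioi (0:ℝ), c * Real.exp (-(rstar / 2) * s) := by
    apply integral_mono_of_nonneg (ae_of_all _ (fun s => ENNReal.toReal_nonneg)) hBint
    filter_upwards [ae_restrict_mem measurableSet_Ioi] with s hs
    exact step3 s hs
  -- step 5 : evaluate the exponential integral
  have step5 : ∫ s in Set.Ioi (0:ℝ), c * Real.exp (-(rstar / 2) * s) = c * (2 / rstar) := by
    rw [integral_const_mul]
    simp only [neg_mul, ← mul_neg]
    simp only [show ∀ s : ℝ, rstar / 2 * -s = -(rstar / 2 * s) from fun s => by ring]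
    have := integral_comp_mul_left_Ioi (fun u => Real.exp (-u)) 0
      (by positivity : (0:ℝ) < rstar / 2)
    simp only [mul_zero] at this
    rw [this, integral_exp_neg_Ioi_zero, smul_eq_mul, mul_one]
    congr 1
    rw [inv_div]
  have hcpos : 0 < c := Real.exp_pos _
  calc ∫ ω, max (S t ω - x) 0 ∂μ ≤ ∫ ω, G ω ∂μ := step1
    _ = ∫ s in Set.Ioi (0:ℝ), (μ {a | s < G a}).toReal := step2
    _ ≤ ∫ s in Set.Ioi (0:ℝ), c * Real.exp (-(rstar / 2) * s) := step4
    _ = c * (2 / rstar) := step5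
    _ ≤ (4 / rstar) * c := by
        rw [mul_comm]
        apply mul_le_mul_of_nonneg_right _ (le_of_lt hcpos)
        have h24 : (2:ℝ) / rstar ≤ 4 / rstar := by gcongr <;> norm_num
        exact h24
    _ = (4 / rstar) * Real.exp (-(rstar / 2) * (x - 2 * P)) := by rw [hcdef]
end

section
/- Assume that for every β > λ_e there exists r > 0 with E[exp(r·(Z_1 − β))] = 1. Then for every P > 0 the transmission probability exists and equals ρ = lim_{n→∞} (1/n)·Σ_{t=1}^n Pr(S_t ≥ P) = min(1, λ_e/P). -/
open MeasureTheory ProbabilityTheory Filter Finset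
open scoped Topology

private lemma aux_step {Ω : Type*} [MeasurableSpace Ω] (μ : Measure Ω) [IsProbabilityMeasure μ]
    (A B : Ω → ℝ) (hAB : IndepFun A B μ)
    (hA1 : Integrable A μ) (hA2 : Integrable (fun ω => (A ω)^2) μ)
    (hA3 : Integrable (fun ω => (A ω)^3) μ) (hA4 : Integrable (fun ω => (A ω)^4) μ)
    (hB1 : Integrable B μ) (hB2 : Integrable (fun ω => (B ω)^2) μ)
    (hB3 : Integrable (fun ω => (B ω)^3) μ) (hB4 : Integrable (fun ω => (B ω)^4) μ) :
    Integrable (fun ω => A ω + B ω) μ ∧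
    Integrable (fun ω => (A ω + B ω)^2) μ ∧
    Integrable (fun ω => (A ω + B ω)^3) μ ∧
    Integrable (fun ω => (A ω + B ω)^4) μ ∧
    (∫ ω, (A ω + B ω) ∂μ) = (∫ ω, A ω ∂μ) + ∫ ω, B ω ∂μ ∧
    (∫ ω, (A ω + B ω)^2 ∂μ) = (∫ ω, (A ω)^2 ∂μ)
      + 2 * (∫ ω, A ω ∂μ) * (∫ ω, B ω ∂μ) + ∫ ω, (B ω)^2 ∂μ ∧
    (∫ ω, (A ω + B ω)^4 ∂μ) = (∫ ω, (A ω)^4 ∂μ)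
      + 4 * (∫ ω, (A ω)^3 ∂μ) * (∫ ω, B ω ∂μ)
      + 6 * (∫ ω, (A ω)^2 ∂μ) * (∫ ω, (B ω)^2 ∂μ)
      + 4 * (∫ ω, A ω ∂μ) * (∫ ω, (B ω)^3 ∂μ)
      + ∫ ω, (B ω)^4 ∂μ := by
  have hin : ∀ i j : ℕ, IndepFun (fun ω => (A ω)^i) (fun ω => (B ω)^j) μ :=
    fun i j => hAB.comp (measurable_id.pow_const i) (measurable_id.pow_const j)
  have hAk : ∀ i : ℕ, 1 ≤ i → i ≤ 4 → Integrable (fun ω => (A ω)^i) μ := by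
    intro i h1 h4
    interval_cases i
    · simpa using hA1
    · exact hA2
    · exact hA3
    · exact hA4
  have hBk : ∀ j : ℕ, 1 ≤ j → j ≤ 4 → Integrable (fun ω => (B ω)^j) μ := by
    intro j h1 h4
    interval_cases j
    · simpa using hB1
    · exact hB2
    · exact hB3
    · exact hB4
  have hmul : ∀ i j : ℕ, 1 ≤ i → i ≤ 4 → 1 ≤ j → j ≤ 4 →
      Integrable (fun ω => (A ω)^i * (B ω)^j) μ :=
    fun i j hi1 hi4 hj1 hj4 => (hin i j).integrable_mul (hAk i hi1 hi4) (hBk j hj1 hj4)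
  have hintmul : ∀ i j : ℕ, 1 ≤ i → i ≤ 4 → 1 ≤ j → j ≤ 4 →
      (∫ ω, (A ω)^i * (B ω)^j ∂μ) = (∫ ω, (A ω)^i ∂μ) * ∫ ω, (B ω)^j ∂μ :=
    fun i j hi1 hi4 hj1 hj4 =>
      (hin i j).integral_fun_mul_eq_mul_integral (hAk i hi1 hi4).aestronglyMeasurable
        (hBk j hj1 hj4).aestronglyMeasurable
  have i1 : Integrable (fun ω => A ω + B ω) μ := hA1.add hB1
  -- expansions
  have e2 : ∀ ω, (A ω + B ω)^2 = (A ω)^2 + (2*(A ω^1 * B ω^1) + (B ω)^2) := by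
    intro ω; ring
  have e3 : ∀ ω, (A ω + B ω)^3
      = (A ω)^3 + (3*(A ω^2 * B ω^1) + (3*(A ω^1 * B ω^2) + (B ω)^3)) := by
    intro ω; ring
  have e4 : ∀ ω, (A ω + B ω)^4
      = (A ω)^4 + (4*(A ω^3 * B ω^1) + (6*(A ω^2 * B ω^2)
        + (4*(A ω^1 * B ω^3) + (B ω)^4))) := by
    intro ω; ring
  have i2 : Integrable (fun ω => (A ω + B ω)^2) μ := by
    rw [show (fun ω => (A ω + B ω)^2)
      = fun ω => (A ω)^2 + (2*(A ω^1 * B ω^1) + (B ω)^2) from funext e2]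
    exact hA2.add (((hmul 1 1 le_rfl (by norm_num) le_rfl (by norm_num)).const_mul 2).add hB2)
  have i3 : Integrable (fun ω => (A ω + B ω)^3) μ := by
    rw [show (fun ω => (A ω + B ω)^3)
      = fun ω => (A ω)^3 + (3*(A ω^2 * B ω^1) + (3*(A ω^1 * B ω^2) + (B ω)^3)) from funext e3]
    exact hA3.add (((hmul 2 1 (by norm_num) (by norm_num) le_rfl (by norm_num)).const_mul 3).add
      (((hmul 1 2 le_rfl (by norm_num) (by norm_num) (by norm_num)).const_mul 3).add hB3))
  have i4 : Integrable (fun ω => (A ω + B ω)^4) μ := by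
    rw [show (fun ω => (A ω + B ω)^4)
      = fun ω => (A ω)^4 + (4*(A ω^3 * B ω^1) + (6*(A ω^2 * B ω^2)
        + (4*(A ω^1 * B ω^3) + (B ω)^4))) from funext e4]
    exact hA4.add (((hmul 3 1 (by norm_num) (by norm_num) le_rfl (by norm_num)).const_mul 4).add
      (((hmul 2 2 (by norm_num) (by norm_num) (by norm_num) (by norm_num)).const_mul 6).add
        (((hmul 1 3 le_rfl (by norm_num) (by norm_num) (by norm_num)).const_mul 4).add hB4)))
  have m11 := hmul 1 1 le_rfl (by norm_num) le_rfl (by norm_num)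
  have m31 := hmul 3 1 (by norm_num) (by norm_num) le_rfl (by norm_num)
  have m22 := hmul 2 2 (by norm_num) (by norm_num) (by norm_num) (by norm_num)
  have m13 := hmul 1 3 le_rfl (by norm_num) (by norm_num) (by norm_num)
  refine ⟨i1, i2, i3, i4, integral_add hA1 hB1, ?_, ?_⟩
  · have g1 : Integrable (fun ω => 2*(A ω^1 * B ω^1) + (B ω)^2) μ :=
      (m11.const_mul 2).add hB2
    have g2 : Integrable (fun ω => 2*(A ω^1 * B ω^1)) μ := m11.const_mul 2
    rw [integral_congr_ae (Eventually.of_forall e2), integral_add hA2 g1, integral_add g2 hB2,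
      integral_const_mul _ _, hintmul 1 1 le_rfl (by norm_num) le_rfl (by norm_num)]
    simp only [pow_one]
    ring
  · have g1 : Integrable (fun ω => 4*(A ω^3 * B ω^1) + (6*(A ω^2 * B ω^2)
        + (4*(A ω^1 * B ω^3) + (B ω)^4))) μ :=
      (m31.const_mul 4).add ((m22.const_mul 6).add ((m13.const_mul 4).add hB4))
    have g2 : Integrable (fun ω => 6*(A ω^2 * B ω^2) + (4*(A ω^1 * B ω^3) + (B ω)^4)) μ :=
      (m22.const_mul 6).add ((m13.const_mul 4).add hB4)
    have g3 : Integrable (fun ω => 4*(A ω^1 * B ω^3) + (B ω)^4) μ := (m13.const_mul 4).add hB4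
    rw [integral_congr_ae (Eventually.of_forall e4),
      integral_add hA4 g1, integral_add (m31.const_mul 4) g2,
      integral_add (m22.const_mul 6) g3, integral_add (m13.const_mul 4) hB4,
      integral_const_mul _ _, integral_const_mul _ _, integral_const_mul _ _,
      hintmul 3 1 (by norm_num) (by norm_num) le_rfl (by norm_num),
      hintmul 2 2 (by norm_num) (by norm_num) (by norm_num) (by norm_num),
      hintmul 1 3 le_rfl (by norm_num) (by norm_num) (by norm_num)]
    simp only [pow_one]
    ring

private lemma aux_moment {Ω : Type*} [MeasurableSpace Ω] (μ : Measure Ω) [IsProbabilityMeasure μ]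
    (Y : ℕ → Ω → ℝ) (hYmeas : ∀ t, Measurable (Y t))
    (hYindep : iIndepFun Y μ)
    (hYint : ∀ k : ℕ, k ≤ 4 → ∀ t, 1 ≤ t → Integrable (fun ω => (Y t ω)^k) μ)
    (hEY : ∀ t, 1 ≤ t → ∫ ω, Y t ω ∂μ = 0)
    (σ2 K4 : ℝ)
    (hEY2 : ∀ t, 1 ≤ t → ∫ ω, (Y t ω)^2 ∂μ = σ2)
    (hEY4 : ∀ t, 1 ≤ t → ∫ ω, (Y t ω)^4 ∂μ = K4) :
    ∀ n : ℕ,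
      Integrable (fun ω => ∑ t ∈ Icc 1 n, Y t ω) μ ∧
      Integrable (fun ω => (∑ t ∈ Icc 1 n, Y t ω)^2) μ ∧
      Integrable (fun ω => (∑ t ∈ Icc 1 n, Y t ω)^3) μ ∧
      Integrable (fun ω => (∑ t ∈ Icc 1 n, Y t ω)^4) μ ∧
      (∫ ω, ∑ t ∈ Icc 1 n, Y t ω ∂μ) = 0 ∧
      (∫ ω, (∑ t ∈ Icc 1 n, Y t ω)^2 ∂μ) = n * σ2 ∧
      (∫ ω, (∑ t ∈ Icc 1 n, Y t ω)^4 ∂μ) ≤ (3*σ2^2 + K4 + 1) * n^2 := by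
  have hσ2 : 0 ≤ σ2 := by
    rw [← hEY2 1 le_rfl]; exact integral_nonneg fun ω => sq_nonneg _
  have hK4 : 0 ≤ K4 := by
    rw [← hEY4 1 le_rfl]; exact integral_nonneg fun ω => by positivity
  intro n
  induction n with
  | zero =>
    refine ⟨?_, ?_, ?_, ?_, ?_, ?_, ?_⟩ <;>
      simp [Finset.Icc_eq_empty (by omega : ¬ (1:ℕ) ≤ 0), integrable_const]
  | succ n ih =>
    obtain ⟨ih1, ih2, ih3, ih4, ihm1, ihm2, ihm4⟩ := ih
    have hn1 : 1 ≤ n + 1 := by omega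
    have hBint : ∀ k, k ≤ 4 → Integrable (fun ω => (Y (n+1) ω)^k) μ :=
      fun k hk => hYint k hk (n+1) hn1
    have hAB : IndepFun (fun ω => ∑ t ∈ Icc 1 n, Y t ω) (Y (n+1)) μ := by
      have h := hYindep.indepFun_finsetSum_of_notMem hYmeas
        (s := Icc 1 n) (i := n+1) (by simp)
      have heq : (∑ j ∈ Icc 1 n, Y j) = fun ω => ∑ t ∈ Icc 1 n, Y t ω := by
        funext ω; simp
      rwa [heq] at h
    have hB1 : Integrable (Y (n+1)) μ := by
      have := hBint 1 (by norm_num)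
      simpa using this
    have hstep := aux_step μ (fun ω => ∑ t ∈ Icc 1 n, Y t ω) (Y (n+1)) hAB
      ih1 ih2 ih3 ih4 hB1 (hBint 2 (by norm_num)) (hBint 3 (by norm_num))
      (hBint 4 (by norm_num))
    obtain ⟨s1, s2, s3, s4, sm1, sm2, sm4⟩ := hstep
    have hsum : ∀ ω : Ω, ∑ t ∈ Icc 1 (n+1), Y t ω = (∑ t ∈ Icc 1 n, Y t ω) + Y (n+1) ω :=
      fun ω => Finset.sum_Icc_succ_top (Nat.succ_le_succ (Nat.zero_le n)) _
    simp only [hsum]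
    refine ⟨s1, s2, s3, s4, ?_, ?_, ?_⟩
    · rw [sm1, ihm1, hEY (n+1) hn1]; ring
    · rw [sm2, ihm1, ihm2, hEY2 (n+1) hn1]; push_cast; ring
    · rw [sm4, ihm1, ihm2, hEY (n+1) hn1, hEY2 (n+1) hn1, hEY4 (n+1) hn1]
      push_cast
      nlinarith [ihm4, hσ2, hK4, Nat.cast_nonneg (α := ℝ) n, sq_nonneg σ2]


set_option maxHeartbeats 1600000 in
/-- **Transmission probability with infinite battery capacity.** If for every
`β > λe` the cumulant generating function of `Z 1 - β` has a positive root, then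
for every transmission power `P > 0` the transmission probability
`ρ = lim_{n→∞} (1/n) ∑_{t=1}^n Pr(S t ≥ P)` exists and equals `min 1 (λe/P)`. -/
theorem transmission_probability_infinite_battery
    {Ω : Type*} [MeasurableSpace Ω] (μ : Measure Ω) [IsProbabilityMeasure μ]
    (Z : ℕ → Ω → ℝ)
    (hmeas : ∀ t, Measurable (Z t))
    (hindep : iIndepFun Z μ)
    (hident : ∀ i j, 1 ≤ i → 1 ≤ j → IdentDistrib (Z i) (Z j) μ μ)
    (hnonneg : ∀ t ω, 0 ≤ Z t ω)
    (hZint : Integrable (Z 1) μ)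
    (lamE : ℝ) (hlamE : lamE = ∫ ω, Z 1 ω ∂μ)
    (hcgf : ∀ β : ℝ, lamE < β → ∃ r : ℝ, 0 < r ∧
      Integrable (fun ω => Real.exp (r * (Z 1 ω - β))) μ ∧
      ∫ ω, Real.exp (r * (Z 1 ω - β)) ∂μ = 1)
    (P : ℝ) (hP : 0 < P)
    (S : ℕ → Ω → ℝ)
    (hS0 : ∀ ω, S 0 ω = 0)
    (hS : ∀ t ω, S (t + 1) ω = S t ω + Z (t + 1) ω - (if P ≤ S t ω then P else 0)) :
    Filter.Tendsto
      (fun n : ℕ => (1 / (n : ℝ)) * ∑ t ∈ Finset.Icc 1 n, (μ {ω | P ≤ S t ω}).toReal)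
      Filter.atTop (nhds (min 1 (lamE / P))) := by
  classical
  -- measurability of S
  have hSmeas : ∀ t, Measurable (S t) := by
    intro t
    induction t with
    | zero =>
      have h : S 0 = fun _ => (0:ℝ) := funext hS0
      rw [h]; exact measurable_const
    | succ n ih =>
      have h : S (n+1) = fun ω => S n ω + Z (n+1) ω - (if P ≤ S n ω then P else 0) :=
        funext (hS n)
      rw [h]
      exact (ih.add (hmeas _)).sub (Measurable.ite (measurableSet_le measurable_const ih)
        measurable_const measurable_const)
  have hSnonneg : ∀ t ω, 0 ≤ S t ω := by
    intro t
    induction t with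
    | zero => intro ω; rw [hS0]
    | succ n ih =>
      intro ω
      rw [hS]
      have h1 := hnonneg (n+1) ω
      have h2 := ih ω
      split_ifs with h
      · linarith
      · linarith
  have hSev : ∀ t, MeasurableSet {ω | P ≤ S t ω} :=
    fun t => measurableSet_le measurable_const (hSmeas t)
  have hZint' : ∀ t, 1 ≤ t → Integrable (Z t) μ :=
    fun t ht => ((hident t 1 ht le_rfl).integrable_iff).mpr hZint
  have hEZ : ∀ t, 1 ≤ t → ∫ ω, Z t ω ∂μ = lamE := by
    intro t ht; rw [hlamE]; exact (hident t 1 ht le_rfl).integral_eq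
  -- telescoping identity (pathwise)
  have htel : ∀ n ω, S n ω + ∑ t ∈ range n, (if P ≤ S t ω then P else 0)
      = ∑ t ∈ Icc 1 n, Z t ω := by
    intro n ω
    induction n with
    | zero => simp [hS0]
    | succ n ih =>
      rw [Finset.sum_range_succ, Finset.sum_Icc_succ_top (Nat.succ_le_succ (Nat.zero_le n)),
        hS]
      linarith
  -- lower bound for S
  have hlow : ∀ t ω, (∑ s ∈ Icc 1 t, Z s ω) - t * P ≤ S t ω := by
    intro t ω
    have h := htel t ω
    have hb : ∑ s ∈ range t, (if P ≤ S s ω then P else 0) ≤ t * P := by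
      calc ∑ s ∈ range t, (if P ≤ S s ω then P else (0:ℝ)) ≤ ∑ _s ∈ range t, P :=
            Finset.sum_le_sum (fun i _ => by split_ifs <;> [exact le_rfl; exact hP.le])
        _ = t * P := by rw [Finset.sum_const, Finset.card_range, nsmul_eq_mul]
    linarith
  -- integrability of S
  have hSint : ∀ n, Integrable (S n) μ := by
    intro n
    have hg : Integrable (fun ω => ∑ t ∈ Icc 1 n, Z t ω) μ :=
      integrable_finset_sum _ (fun t ht => hZint' t (Finset.mem_Icc.mp ht).1)
    refine hg.mono' ((hSmeas n).aestronglyMeasurable) ?_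
    filter_upwards with ω
    rw [Real.norm_eq_abs, abs_of_nonneg (hSnonneg n ω)]
    have h := htel n ω
    have hb : 0 ≤ ∑ t ∈ range n, (if P ≤ S t ω then P else (0:ℝ)) :=
      Finset.sum_nonneg fun i _ => by split_ifs <;> [exact hP.le; exact le_rfl]
    linarith
  -- key identity in expectation
  have hiden : ∀ n : ℕ, (n : ℝ) * lamE
      = (∫ ω, S n ω ∂μ) + P * ∑ t ∈ range n, (μ {ω | P ≤ S t ω}).toReal := by
    intro n
    have hind : ∀ t : ℕ, Integrable (fun ω => if P ≤ S t ω then P else (0:ℝ)) μ := by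
      intro t
      have heq : (fun ω => if P ≤ S t ω then P else (0:ℝ))
          = Set.indicator {ω | P ≤ S t ω} (fun _ => P) := by
        funext ω
        simp [Set.indicator_apply, Set.mem_setOf_eq]
      rw [heq]
      exact (integrable_const P).indicator (hSev t)
    have h2 : ∀ t : ℕ, ∫ ω, (if P ≤ S t ω then P else (0:ℝ)) ∂μ
        = (μ {ω | P ≤ S t ω}).toReal * P := by
      intro t
      have heq : (fun ω => if P ≤ S t ω then P else (0:ℝ))
          = Set.indicator {ω | P ≤ S t ω} (fun _ => P) := by
        funext ω
        simp [Set.indicator_apply, Set.mem_setOf_eq]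
      rw [heq, integral_indicator_const P (hSev t)]
      simp [smul_eq_mul, Measure.real]
    calc (n:ℝ) * lamE = ∑ t ∈ Icc 1 n, ∫ ω, Z t ω ∂μ := by
          rw [Finset.sum_congr rfl (fun t ht => hEZ t (Finset.mem_Icc.mp ht).1)]
          rw [Finset.sum_const, Nat.card_Icc, nsmul_eq_mul]
          norm_num
      _ = ∫ ω, ∑ t ∈ Icc 1 n, Z t ω ∂μ :=
          (integral_finset_sum _ (fun t ht => hZint' t (Finset.mem_Icc.mp ht).1)).symm
      _ = ∫ ω, (S n ω + ∑ t ∈ range n, (if P ≤ S t ω then P else 0)) ∂μ :=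
          integral_congr_ae (Eventually.of_forall fun ω => (htel n ω).symm)
      _ = (∫ ω, S n ω ∂μ) + ∫ ω, ∑ t ∈ range n, (if P ≤ S t ω then P else (0:ℝ)) ∂μ :=
          integral_add (hSint n) (integrable_finset_sum _ fun t _ => hind t)
      _ = (∫ ω, S n ω ∂μ) + ∑ t ∈ range n, ∫ ω, (if P ≤ S t ω then P else (0:ℝ)) ∂μ := by
          rw [integral_finset_sum _ (fun t _ => hind t)]
      _ = (∫ ω, S n ω ∂μ) + P * ∑ t ∈ range n, (μ {ω | P ≤ S t ω}).toReal := by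
          rw [Finset.sum_congr rfl fun t _ => h2 t, ← Finset.sum_mul]
          ring
  -- rewriting sums over Icc 1 n
  have hIcc : ∀ (f : ℕ → ℝ) (n : ℕ), ∑ t ∈ Icc 1 n, f t = ∑ i ∈ range n, f (i+1) := by
    intro f n
    rw [← Finset.Ico_add_one_right_eq_Icc, Finset.sum_Ico_eq_sum_range]
    exact Finset.sum_congr (by norm_num) fun i _ => by rw [Nat.add_comm]
  -- case split
  rcases le_or_gt lamE P with hcase | hcase
  · -- subcritical / critical: lamE ≤ P
    have hES : Tendsto (fun n : ℕ => (∫ ω, S n ω ∂μ) / n) atTop (𝓝 0) := by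
      -- exponential moment ⇒ fourth moments
      obtain ⟨r, hr, hexpint, -⟩ := hcgf (lamE + 1) (by linarith)
      have hexpZ : Integrable (fun ω => Real.exp (r * Z 1 ω)) μ := by
        have h := hexpint.mul_const (Real.exp (r * (lamE + 1)))
        refine h.congr (Eventually.of_forall fun ω => ?_)
        show Real.exp (r * (Z 1 ω - (lamE + 1))) * Real.exp (r * (lamE + 1))
          = Real.exp (r * Z 1 ω)
        rw [← Real.exp_add]
        congr 1
        ring
      have hZ4 : Integrable (fun ω => (Z 1 ω)^4) μ := by
        refine (hexpZ.const_mul (24 / r^4)).mono'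
          (((hmeas 1).pow_const 4).aestronglyMeasurable) ?_
        filter_upwards with ω
        have hz := hnonneg 1 ω
        have h24 : (r * Z 1 ω)^4 ≤ 24 * Real.exp (r * Z 1 ω) := by
          have h := Real.pow_div_factorial_le_exp (x := r * Z 1 ω) (by positivity) 4
          have hf : ((Nat.factorial 4 : ℕ) : ℝ) = 24 := by norm_num [Nat.factorial]
          rw [hf] at h
          linarith [(div_le_iff₀ (by norm_num : (0:ℝ) < 24)).mp h]
        rw [Real.norm_eq_abs, abs_of_nonneg (by positivity)]
        have hr4 : (0:ℝ) < r^4 := by positivity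
        rw [div_mul_eq_mul_div, le_div_iff₀ hr4]
        calc (Z 1 ω)^4 * r^4 = (r * Z 1 ω)^4 := by ring
          _ ≤ 24 * Real.exp (r * Z 1 ω) := h24
      have hY4 : Integrable (fun ω => (Z 1 ω - lamE)^4) μ := by
        have hg : Integrable (fun ω => 8 * ((Z 1 ω)^4 + lamE^4)) μ := by
          exact (hZ4.add (integrable_const _)).const_mul 8
        refine hg.mono'
          ((((hmeas 1).sub_const lamE).pow_const 4).aestronglyMeasurable) ?_
        filter_upwards with ω
        rw [Real.norm_eq_abs, abs_of_nonneg (by positivity)]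
        nlinarith [sq_nonneg (Z 1 ω + lamE), sq_nonneg (Z 1 ω - lamE),
          sq_nonneg ((Z 1 ω)^2 - lamE^2), sq_nonneg ((Z 1 ω - lamE)^2),
          sq_nonneg ((Z 1 ω + lamE)^2), sq_nonneg (Z 1 ω * lamE)]
      have hYint : ∀ k : ℕ, k ≤ 4 → ∀ t, 1 ≤ t →
          Integrable (fun ω => (Z t ω - lamE)^k) μ := by
        intro k hk t ht
        have hid : IdentDistrib (fun ω => (Z t ω - lamE)^k)
            (fun ω => (Z 1 ω - lamE)^k) μ μ :=
          (hident t 1 ht le_rfl).comp ((measurable_id.sub_const lamE).pow_const k)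
        rw [hid.integrable_iff]
        have hg : Integrable (fun ω => (Z 1 ω - lamE)^4 + 1) μ := by
          exact hY4.add (integrable_const 1)
        refine hg.mono'
          ((((hmeas 1).sub_const lamE).pow_const k).aestronglyMeasurable) ?_
        filter_upwards with ω
        rw [Real.norm_eq_abs, abs_pow]
        have ha0 : 0 ≤ |Z 1 ω - lamE| := abs_nonneg _
        have ha4 : |Z 1 ω - lamE|^4 = (Z 1 ω - lamE)^4 := by
          rw [← abs_pow, abs_of_nonneg (by positivity)]
        rcases le_or_gt (|Z 1 ω - lamE|) 1 with h | h
        · have hk1 : |Z 1 ω - lamE|^k ≤ 1 := pow_le_one₀ ha0 h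
          nlinarith [pow_nonneg ha0 4]
        · have hk1 : |Z 1 ω - lamE|^k ≤ |Z 1 ω - lamE|^4 := pow_le_pow_right₀ h.le hk
          nlinarith
      have hEY : ∀ t, 1 ≤ t → ∫ ω, (Z t ω - lamE) ∂μ = 0 := by
        intro t ht
        rw [integral_sub (hZint' t ht) (integrable_const _), hEZ t ht, integral_const]
        simp
      have hEYk : ∀ k : ℕ, ∀ t, 1 ≤ t →
          ∫ ω, (Z t ω - lamE)^k ∂μ = ∫ ω, (Z 1 ω - lamE)^k ∂μ :=
        fun k t ht => ((hident t 1 ht le_rfl).comp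
          ((measurable_id.sub_const lamE).pow_const k)).integral_eq
      have hYindep : iIndepFun
          (fun t ω => Z t ω - lamE) μ :=
        hindep.comp (fun _ x => x - lamE) (fun _ => measurable_id.sub_const lamE)
      have mom := aux_moment μ (fun t ω => Z t ω - lamE)
        (fun t => (hmeas t).sub_const lamE) hYindep hYint hEY
        (∫ ω, (Z 1 ω - lamE)^2 ∂μ) (∫ ω, (Z 1 ω - lamE)^4 ∂μ)
        (fun t ht => hEYk 2 t ht) (fun t ht => hEYk 4 t ht)
      -- pathwise upper bound for S via suffix sums
      have lemA : ∀ (n : ℕ) (ω : Ω), ∃ k, k ≤ n ∧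
          S n ω ≤ 2*P + ∑ t ∈ Icc (k+1) n, (Z t ω - P) := by
        intro n ω
        induction n with
        | zero =>
          refine ⟨0, le_rfl, ?_⟩
          rw [hS0]
          have he : Icc (0+1) 0 = (∅ : Finset ℕ) := Finset.Icc_eq_empty (by omega)
          rw [he, Finset.sum_empty]
          linarith
        | succ n ihn =>
          obtain ⟨k, hk, hle⟩ := ihn
          by_cases h : P ≤ S n ω
          · refine ⟨k, by omega, ?_⟩
            rw [hS, if_pos h, Finset.sum_Icc_succ_top (by omega : k+1 ≤ n+1)]
            linarith
          · refine ⟨n, by omega, ?_⟩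
            rw [hS, if_neg h, Finset.Icc_self, Finset.sum_singleton]
            push_neg at h
            linarith
      have habs : ∀ (x c : ℝ), 0 < c → |x| ≤ c + x^4/c^3 := by
        intro x c hc
        rcases le_or_gt (|x|) c with h | h
        · have h2 : (0:ℝ) ≤ x^4/c^3 := by positivity
          linarith
        · have h1 : c^3 ≤ |x|^3 := pow_le_pow_left₀ hc.le h.le 3
          have h3 : |x|^4 = x^4 := by rw [← abs_pow, abs_of_nonneg (by positivity)]
          have h4 : |x| * c^3 ≤ x^4 := by nlinarith [abs_nonneg x]
          have h5 : |x| ≤ x^4 / c^3 := (le_div_iff₀ (by positivity)).mpr h4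
          linarith
      set C := 3*(∫ ω, (Z 1 ω - lamE)^2 ∂μ)^2 + (∫ ω, (Z 1 ω - lamE)^4 ∂μ) + 1 with hC
      have hCpos : 0 < C := by
        have h2 : (0:ℝ) ≤ ∫ ω, (Z 1 ω - lamE)^2 ∂μ := integral_nonneg fun ω => sq_nonneg _
        have h4 : (0:ℝ) ≤ ∫ ω, (Z 1 ω - lamE)^4 ∂μ := integral_nonneg fun ω => by positivity
        rw [hC]
        nlinarith
      have key : ∀ ε : ℝ, 0 < ε → ∀ n : ℕ, 1 ≤ n →
          (∫ ω, S n ω ∂μ) ≤ 2*P + 2*ε*n + 4*C/ε^3 := by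
        intro ε hε n hn
        have hn0 : (0:ℝ) < n := by exact_mod_cast hn
        have hεn : (0:ℝ) < ε*n := by positivity
        have hpt : ∀ ω, S n ω ≤ 2*P + 2*(ε*(n:ℝ))
            + (2/(ε*(n:ℝ))^3) * ∑ j ∈ range (n+1), (∑ t ∈ Icc 1 j, (Z t ω - lamE))^4 := by
          intro ω
          obtain ⟨k, hk, hle⟩ := lemA n ω
          have habs' : ∀ j, j ≤ n → |∑ t ∈ Icc 1 j, (Z t ω - lamE)|
              ≤ ε*n + (∑ j' ∈ range (n+1), (∑ t ∈ Icc 1 j', (Z t ω - lamE))^4)/(ε*n)^3 := by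
            intro j hj
            have h1 := habs (∑ t ∈ Icc 1 j, (Z t ω - lamE)) (ε*n) hεn
            have h2 : ((∑ t ∈ Icc 1 j, (Z t ω - lamE))^4)
                ≤ ∑ j' ∈ range (n+1), (∑ t ∈ Icc 1 j', (Z t ω - lamE))^4 :=
              Finset.single_le_sum (f := fun j' => (∑ t ∈ Icc 1 j', (Z t ω - lamE))^4)
                (fun i _ => by positivity) (Finset.mem_range.mpr (by omega))
            have h3 : (∑ t ∈ Icc 1 j, (Z t ω - lamE))^4/(ε*n)^3
                ≤ (∑ j' ∈ range (n+1), (∑ t ∈ Icc 1 j', (Z t ω - lamE))^4)/(ε*n)^3 := by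
              gcongr
            linarith
          have hsuffix : ∑ t ∈ Icc (k+1) n, (Z t ω - P)
              ≤ (∑ t ∈ Icc 1 n, (Z t ω - lamE)) - (∑ t ∈ Icc 1 k, (Z t ω - lamE)) := by
            have h1 : ∑ t ∈ Icc (k+1) n, (Z t ω - P) ≤ ∑ t ∈ Icc (k+1) n, (Z t ω - lamE) :=
              Finset.sum_le_sum fun t _ => by linarith
            have h2 : (∑ t ∈ Icc 1 k, (Z t ω - lamE)) + ∑ t ∈ Icc (k+1) n, (Z t ω - lamE)
                = ∑ t ∈ Icc 1 n, (Z t ω - lamE) := by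
              rw [show Icc 1 k = Ioc 0 k from Finset.Icc_add_one_left_eq_Ioc 0 k,
                show Icc (k+1) n = Ioc k n from Finset.Icc_add_one_left_eq_Ioc k n,
                show Icc 1 n = Ioc 0 n from Finset.Icc_add_one_left_eq_Ioc 0 n]
              exact Finset.sum_Ioc_consecutive _ (Nat.zero_le k) hk
            linarith
          have hWn := habs' n le_rfl
          have hWk := habs' k hk
          have habs1 := le_abs_self (∑ t ∈ Icc 1 n, (Z t ω - lamE))
          have habs2 := neg_abs_le (∑ t ∈ Icc 1 k, (Z t ω - lamE))
          have hrw : (2/(ε*(n:ℝ))^3) * ∑ j ∈ range (n+1), (∑ t ∈ Icc 1 j, (Z t ω - lamE))^4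
              = 2 * ((∑ j' ∈ range (n+1), (∑ t ∈ Icc 1 j', (Z t ω - lamE))^4)/(ε*n)^3) := by
            ring
          linarith
        have hint4 : ∀ j : ℕ, Integrable (fun ω => (∑ t ∈ Icc 1 j, (Z t ω - lamE))^4) μ :=
          fun j => (mom j).2.2.2.1
        have hint_rhs : Integrable (fun ω => 2*P + 2*(ε*(n:ℝ))
            + (2/(ε*(n:ℝ))^3) * ∑ j ∈ range (n+1), (∑ t ∈ Icc 1 j, (Z t ω - lamE))^4) μ :=
          (integrable_const _).add ((integrable_finset_sum _ fun j _ => hint4 j).const_mul _)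
        have hEb := integral_mono (hSint n) hint_rhs hpt
        have hcomp : ∫ ω, (2*P + 2*(ε*(n:ℝ))
            + (2/(ε*(n:ℝ))^3) * ∑ j ∈ range (n+1), (∑ t ∈ Icc 1 j, (Z t ω - lamE))^4) ∂μ
            = 2*P + 2*(ε*(n:ℝ)) + (2/(ε*(n:ℝ))^3)
              * ∑ j ∈ range (n+1), ∫ ω, (∑ t ∈ Icc 1 j, (Z t ω - lamE))^4 ∂μ := by
          rw [integral_add (integrable_const _)
            ((integrable_finset_sum _ fun j _ => hint4 j).const_mul _),
            integral_const, integral_const_mul _ _,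
            integral_finset_sum _ fun j _ => hint4 j]
          simp [measure_univ]
        rw [hcomp] at hEb
        have hsum4 : ∑ j ∈ range (n+1), ∫ ω, (∑ t ∈ Icc 1 j, (Z t ω - lamE))^4 ∂μ
            ≤ 2*C*(n:ℝ)^3 := by
          calc ∑ j ∈ range (n+1), ∫ ω, (∑ t ∈ Icc 1 j, (Z t ω - lamE))^4 ∂μ
              ≤ ∑ _j ∈ range (n+1), C*(n:ℝ)^2 := by
                refine Finset.sum_le_sum fun j hj => ?_
                have h1 : ∫ ω, (∑ t ∈ Icc 1 j, (Z t ω - lamE))^4 ∂μ ≤ C * (j:ℝ)^2 := by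
                  exact (mom j).2.2.2.2.2.2
                have hj' : (j:ℝ) ≤ n := by
                  exact_mod_cast Nat.lt_succ_iff.mp (Finset.mem_range.mp hj)
                have hj0 : (0:ℝ) ≤ j := Nat.cast_nonneg j
                have h2 : C * (j:ℝ)^2 ≤ C * (n:ℝ)^2 :=
                  mul_le_mul_of_nonneg_left (pow_le_pow_left₀ hj0 hj' 2) hCpos.le
                linarith
            _ = ((n:ℝ)+1) * (C*(n:ℝ)^2) := by
                rw [Finset.sum_const, Finset.card_range]
                push_cast
                ring
            _ ≤ 2*C*(n:ℝ)^3 := by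
                have hn1' : (1:ℝ) ≤ n := by exact_mod_cast hn
                nlinarith [mul_nonneg (mul_nonneg (sub_nonneg.mpr hn1') hCpos.le)
                  (sq_nonneg (n:ℝ))]
        have h5 : (2/(ε*(n:ℝ))^3) * ∑ j ∈ range (n+1), ∫ ω, (∑ t ∈ Icc 1 j, (Z t ω - lamE))^4 ∂μ
            ≤ (2/(ε*(n:ℝ))^3) * (2*C*(n:ℝ)^3) :=
          mul_le_mul_of_nonneg_left hsum4 (by positivity)
        have hfinal : (2/(ε*(n:ℝ))^3) * (2*C*(n:ℝ)^3) = 4*C/ε^3 := by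
          field_simp
          ring
        linarith
      rw [Metric.tendsto_atTop]
      intro δ hδ
      have hε : (0:ℝ) < δ/4 := by linarith
      have htend := (tendsto_const_div_atTop_nhds_zero_nat
        (2*P + 4*C/(δ/4)^3)).eventually (gt_mem_nhds (by linarith : (0:ℝ) < δ/2))
      obtain ⟨N1, hN1⟩ := eventually_atTop.mp htend
      refine ⟨max N1 1, fun n hn => ?_⟩
      have hn1 : 1 ≤ n := le_trans (le_max_right _ _) hn
      have hnN := le_trans (le_max_left _ _) hn
      have hn0 : (0:ℝ) < n := by exact_mod_cast hn1
      have hkey := key (δ/4) hε n hn1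
      have hbound := hN1 n hnN
      have hnonnegE : (0:ℝ) ≤ (∫ ω, S n ω ∂μ)/n :=
        div_nonneg (integral_nonneg fun ω => hSnonneg n ω) hn0.le
      rw [Real.dist_eq, sub_zero, abs_of_nonneg hnonnegE]
      have h6 : (∫ ω, S n ω ∂μ)/n ≤ (2*P + 2*(δ/4)*n + 4*C/(δ/4)^3)/n := by gcongr
      have h7 : (2*P + 2*(δ/4)*(n:ℝ) + 4*C/(δ/4)^3)/n
          = (2*P + 4*C/(δ/4)^3)/n + 2*(δ/4) := by
        field_simp
        ring
      rw [h7] at h6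
      linarith
    have hmain : Tendsto (fun n : ℕ => (1/(n:ℝ)) * ∑ t ∈ range n, (μ {ω | P ≤ S t ω}).toReal)
        atTop (𝓝 (lamE/P)) := by
      have h1 : Tendsto (fun n : ℕ => (lamE - (∫ ω, S n ω ∂μ)/n)/P) atTop (𝓝 (lamE/P)) := by
        have h2 := (tendsto_const_nhds (x := lamE) (f := atTop)).sub hES
        simpa using h2.div_const P
      refine h1.congr' ?_
      filter_upwards [eventually_ge_atTop 1] with n hn
      have hn0 : (0:ℝ) < n := by exact_mod_cast hn
      have hid := hiden n
      rw [div_eq_iff hP.ne']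
      field_simp
      linarith
    have hp0 : (μ {ω | P ≤ S 0 ω}).toReal = 0 := by
      have h : {ω | P ≤ S 0 ω} = (∅ : Set Ω) := by
        ext ω; simp only [Set.mem_setOf_eq, Set.mem_empty_iff_false, iff_false, not_le, hS0]
        exact hP
      simp [h]
    have hsum : ∀ n : ℕ, ∑ t ∈ Icc 1 n, (μ {ω | P ≤ S t ω}).toReal
        = (∑ t ∈ range n, (μ {ω | P ≤ S t ω}).toReal) + (μ {ω | P ≤ S n ω}).toReal := by
      intro n
      rw [hIcc]
      have h2 := Finset.sum_range_succ' (fun t => (μ {ω | P ≤ S t ω}).toReal) n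
      have h3 := Finset.sum_range_succ (fun t => (μ {ω | P ≤ S t ω}).toReal) n
      rw [hp0] at h2
      rw [h3] at h2
      linarith
    have hlast : Tendsto (fun n : ℕ => (1/(n:ℝ)) * (μ {ω | P ≤ S n ω}).toReal) atTop (𝓝 0) := by
      apply squeeze_zero (g := fun n : ℕ => 1/(n:ℝ))
      · intro n
        have : (0:ℝ) ≤ (μ {ω | P ≤ S n ω}).toReal := ENNReal.toReal_nonneg
        positivity
      · intro n
        have h1 : (μ {ω | P ≤ S n ω}).toReal ≤ 1 := by
          have := prob_le_one (μ := μ) (s := {ω | P ≤ S n ω})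
          simpa using ENNReal.toReal_mono ENNReal.one_ne_top this
        have h2 : (0:ℝ) ≤ 1/(n:ℝ) := by positivity
        calc (1/(n:ℝ)) * (μ {ω | P ≤ S n ω}).toReal ≤ (1/(n:ℝ)) * 1 :=
              mul_le_mul_of_nonneg_left h1 h2
          _ = 1/(n:ℝ) := mul_one _
      · exact tendsto_one_div_atTop_nhds_zero_nat
    have hmin : min 1 (lamE/P) = lamE/P := min_eq_right ((div_le_one hP).mpr hcase)
    rw [hmin]
    have hfin := hmain.add hlast
    rw [add_zero] at hfin
    refine Tendsto.congr (fun n => ?_) hfin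
    rw [hsum n]; ring
  · -- supercritical: P < lamE
    have hmin : min 1 (lamE/P) = 1 := min_eq_left ((one_le_div hP).mpr hcase.le)
    rw [hmin]
    -- strong law of large numbers
    have hsl : ∀ᵐ ω ∂μ, Tendsto (fun t : ℕ => (t:ℝ)⁻¹ * ∑ s ∈ Icc 1 t, Z s ω)
        atTop (𝓝 lamE) := by
      have hpair : Pairwise (Function.onFun (IndepFun · · μ) (fun i : ℕ => Z (i+1))) := by
        intro i j hij
        exact hindep.indepFun (by omega)
      have hid1 : ∀ i : ℕ, IdentDistrib (Z (i+1)) (Z (0+1)) μ μ :=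
        fun i => hident (i+1) 1 (by omega) le_rfl
      have hsl0 := ProbabilityTheory.strong_law_ae (μ := μ) (fun i : ℕ => Z (i+1))
        hZint hpair hid1
      filter_upwards [hsl0] with ω hω
      have : (∫ a, Z (0+1) a ∂μ) = lamE := by rw [hlamE]
      rw [this] at hω
      refine hω.congr fun t => ?_
      rw [hIcc (fun s => Z s ω) t]
      rw [smul_eq_mul]
    -- DCT: probability of the bad event goes to 0
    have hr0 : Tendsto (fun t : ℕ => (μ {ω | ∑ s ∈ Icc 1 t, Z s ω < t*P + P}).toReal)
        atTop (𝓝 0) := by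
      have hA : ∀ t : ℕ, MeasurableSet {ω | ∑ s ∈ Icc 1 t, Z s ω < t*P + P} :=
        fun t => measurableSet_lt (Finset.measurable_sum _ fun s _ => hmeas s) measurable_const
      have hdct := MeasureTheory.tendsto_integral_of_dominated_convergence
        (F := fun t : ℕ => Set.indicator {ω | ∑ s ∈ Icc 1 t, Z s ω < t*P + P} (1 : Ω → ℝ))
        (f := fun _ => (0:ℝ)) (bound := fun _ => (1:ℝ))
        (fun t => ((measurable_one.indicator (hA t)).aestronglyMeasurable))
        (integrable_const 1)
        (fun t => Eventually.of_forall fun ω => by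
          by_cases h : ω ∈ {ω | ∑ s ∈ Icc 1 t, Z s ω < t*P + P}
          · simp [Set.indicator_of_mem h]
          · simp [Set.indicator_of_notMem h])
        (by
          filter_upwards [hsl] with ω hω
          have h1 : ∀ᶠ t : ℕ in atTop, (P + lamE)/2 < (t:ℝ)⁻¹ * ∑ s ∈ Icc 1 t, Z s ω :=
            hω.eventually (eventually_gt_nhds (by linarith))
          have h2 : ∀ᶠ t : ℕ in atTop, 2*P/(lamE - P) ≤ (t:ℝ) :=
            tendsto_natCast_atTop_atTop.eventually_ge_atTop (2*P/(lamE - P))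
          have h3 : ∀ᶠ t : ℕ in atTop, (1:ℕ) ≤ t := eventually_ge_atTop 1
          refine Tendsto.congr' ?_ tendsto_const_nhds
          filter_upwards [h1, h2, h3] with t ht1 ht2 ht3
          have ht0 : (0:ℝ) < t := by exact_mod_cast ht3
          have hnotmem : ω ∉ {ω | ∑ s ∈ Icc 1 t, Z s ω < t*P + P} := by
            simp only [Set.mem_setOf_eq, not_lt]
            have hsum : (t:ℝ) * ((P + lamE)/2) < ∑ s ∈ Icc 1 t, Z s ω := by
              have := (mul_lt_mul_iff_right₀ ht0).mpr ht1
              rwa [← mul_assoc, mul_inv_cancel₀ ht0.ne', one_mul] at this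
            have hlp : (0:ℝ) < lamE - P := by linarith
            have hdrift : 2*P ≤ (t:ℝ) * (lamE - P) := (div_le_iff₀ hlp).mp ht2
            nlinarith
          exact (Set.indicator_of_notMem hnotmem _).symm)
      have hz : (∫ _ω, (0:ℝ) ∂μ) = 0 := integral_zero _ _
      rw [hz] at hdct
      refine hdct.congr fun t => ?_
      rw [MeasureTheory.integral_indicator_one (hA t)]
      rfl
    -- complement probabilities go to 0
    have hq0 : Tendsto (fun t : ℕ => 1 - (μ {ω | P ≤ S t ω}).toReal) atTop (𝓝 0) := by
      apply squeeze_zero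
        (g := fun t : ℕ => (μ {ω | ∑ s ∈ Icc 1 t, Z s ω < t*P + P}).toReal)
      · intro t
        have h1 : (μ {ω | P ≤ S t ω}).toReal ≤ 1 := by
          have := prob_le_one (μ := μ) (s := {ω | P ≤ S t ω})
          simpa using ENNReal.toReal_mono ENNReal.one_ne_top this
        linarith
      · intro t
        have hcompl : 1 - (μ {ω | P ≤ S t ω}).toReal = (μ {ω | P ≤ S t ω}ᶜ).toReal := by
          have h := measure_add_measure_compl (μ := μ) (hSev t)
          rw [measure_univ] at h
          have hfin1 : μ {ω | P ≤ S t ω} ≠ ⊤ := measure_ne_top μ _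
          have hfin2 : μ {ω | P ≤ S t ω}ᶜ ≠ ⊤ := measure_ne_top μ _
          have h2 := congrArg ENNReal.toReal h
          rw [ENNReal.toReal_add hfin1 hfin2, ENNReal.toReal_one] at h2
          linarith
        rw [hcompl]
        refine ENNReal.toReal_mono (measure_ne_top μ _) (measure_mono ?_)
        intro ω hω
        simp only [Set.mem_compl_iff, Set.mem_setOf_eq, not_le] at hω
        simp only [Set.mem_setOf_eq]
        have := hlow t ω
        linarith
      · exact hr0
    -- Cesàro
    have hces : Tendsto (fun n : ℕ => (n:ℝ)⁻¹ *
        ∑ i ∈ range n, (1 - (μ {ω | P ≤ S (i+1) ω}).toReal)) atTop (𝓝 0) :=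
      Filter.Tendsto.cesaro (hq0.comp (tendsto_add_atTop_nat 1))
    have hfin := (tendsto_const_nhds (x := (1:ℝ)) (f := atTop)).sub hces
    rw [sub_zero] at hfin
    refine hfin.congr' ?_
    filter_upwards [eventually_ge_atTop 1] with n hn
    have hn0 : (0:ℝ) < n := by exact_mod_cast hn
    rw [hIcc]
    rw [Finset.sum_sub_distrib, Finset.sum_const, Finset.card_range]
    field_simp
    rw [nsmul_eq_mul, mul_one]; ring
end

section
/- Assume λ_e < P, B > 0, and that there exists r* > 0 with E[exp(r*·(Z_1 − P))] = 1. Then for every t ≥ 1 the expected energy discarded by battery overflow in slot t satisfies E[max(S_{t−1} + Z_t − P·1{S_{t−1} ≥ P} − B, 0)] ≤ (4/r*)·exp(−(r*/2)·(B − 2P)). -/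
open MeasureTheory ProbabilityTheory Filter Finset

/-- Lindley-type recursion on sequences of reals. -/
noncomputable def lindleyFun (P : ℝ) : ℕ → (ℕ → ℝ) → ℝ
  | 0 => fun _ => 0
  | (t+1) => fun z => max (lindleyFun P t z + (z (t+1) - P)) 0

lemma lindleyFun_nonneg (P : ℝ) (t : ℕ) (z : ℕ → ℝ) : 0 ≤ lindleyFun P t z := by
  cases t with
  | zero => exact le_refl 0
  | succ t => exact le_max_right _ _

lemma lindleyFun_measurable (P : ℝ) (t : ℕ) : Measurable (lindleyFun P t) := by
  induction t with
  | zero => exact measurable_const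
  | succ t ih =>
      exact (ih.add ((measurable_pi_apply (t+1)).sub measurable_const)).max measurable_const

lemma lindleyFun_congr (P : ℝ) (t : ℕ) {z z' : ℕ → ℝ} (h : ∀ i, i < t + 1 → z i = z' i) :
    lindleyFun P t z = lindleyFun P t z' := by
  induction t with
  | zero => rfl
  | succ t ih =>
      show max (lindleyFun P t z + (z (t+1) - P)) 0 = max (lindleyFun P t z' + (z' (t+1) - P)) 0
      rw [ih (fun i hi => h i (by omega)), h (t+1) (by omega)]

lemma lindley_indep {Ω : Type*} [MeasurableSpace Ω] {μ : Measure Ω} (P : ℝ) (Z : ℕ → Ω → ℝ)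
    (hmeas : ∀ t, Measurable (Z t))
    (hindep : iIndepFun Z μ) (t : ℕ) :
    IndepFun (fun ω => lindleyFun P t (fun i => Z i ω)) (Z (t+1)) μ := by
  classical
  have hdisj : Disjoint (Finset.range (t+1)) ({t+1} : Finset ℕ) := by
    simp [Finset.disjoint_singleton_right]
  have h1 := hindep.indepFun_finset (Finset.range (t+1)) {t+1} hdisj hmeas
  set φ : ((i : (Finset.range (t+1) : Finset ℕ)) → ℝ) → ℝ :=
    fun v => lindleyFun P t (fun i => if h : i ∈ Finset.range (t+1) then v ⟨i, h⟩ else 0) with hφdef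
  have hφ : Measurable φ := by
    apply (lindleyFun_measurable P t).comp
    apply measurable_pi_lambda
    intro i
    by_cases h : i ∈ Finset.range (t+1)
    · simpa [h] using measurable_pi_apply (⟨i, h⟩ : (Finset.range (t+1) : Finset ℕ))
    · simp only [h, dif_neg, not_false_iff]
      exact measurable_const
  set ψ : ((i : ({t+1} : Finset ℕ)) → ℝ) → ℝ :=
    fun v => v ⟨t+1, Finset.mem_singleton_self _⟩ with hψdef
  have hψ : Measurable ψ := measurable_pi_apply _
  have h2 := h1.comp hφ hψ
  have e1 : (φ ∘ fun a (i : (Finset.range (t+1) : Finset ℕ)) => Z i a)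
      = fun ω => lindleyFun P t (fun i => Z i ω) := by
    funext ω
    exact lindleyFun_congr P t (fun i hi => dif_pos (Finset.mem_range.mpr hi))
  have e2 : (ψ ∘ fun a (i : ({t+1} : Finset ℕ)) => Z i a) = Z (t+1) := rfl
  rw [e1, e2] at h2
  exact h2

/-- One step of the exponential tail bound, using independence. -/
lemma tail_step {Ω : Type*} [MeasurableSpace Ω] (μ : Measure Ω) [IsProbabilityMeasure μ]
    (V X : Ω → ℝ) (hV : Measurable V) (hX : Measurable X)
    (hind : IndepFun V X μ) (r : ℝ) (hr : 0 < r)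
    (hXint : Integrable (fun ω => Real.exp (r * X ω)) μ)
    (hXroot : ∫ ω, Real.exp (r * X ω) ∂μ = 1)
    (htail : ∀ y : ℝ, μ {ω | y ≤ V ω} ≤ ENNReal.ofReal (Real.exp (-(r * y))))
    (x : ℝ) : μ {ω | x ≤ V ω + X ω} ≤ ENNReal.ofReal (Real.exp (-(r * x))) := by
  have : IsProbabilityMeasure (μ.map V) := Measure.isProbabilityMeasure_map hV.aemeasurable
  have : IsProbabilityMeasure (μ.map X) := Measure.isProbabilityMeasure_map hX.aemeasurable
  have hs : MeasurableSet {p : ℝ × ℝ | x - p.1 ≤ p.2} :=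
    measurableSet_le (measurable_const.sub measurable_fst) measurable_snd
  have hmap : μ.map (fun ω => (X ω, V ω)) = (μ.map X).prod (μ.map V) :=
    (indepFun_iff_map_prod_eq_prod_map_map hX.aemeasurable hV.aemeasurable).mp hind.symm
  have hexpmeas : Measurable fun u : ℝ => Real.exp (r * u) :=
    Real.measurable_exp.comp (measurable_id.const_mul r)
  have hIntmap : Integrable (fun u => Real.exp (r * u)) (μ.map X) := by
    rw [integrable_map_measure hexpmeas.aestronglyMeasurable hX.aemeasurable]
    exact hXint
  have key : μ {ω | x ≤ V ω + X ω}
      = ∫⁻ u, (μ.map V) {v | x - u ≤ v} ∂(μ.map X) := by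
    have hpre : {ω | x ≤ V ω + X ω} = (fun ω => (X ω, V ω)) ⁻¹' {p | x - p.1 ≤ p.2} := by
      ext ω
      simp [sub_le_iff_le_add]
    rw [hpre, ← Measure.map_apply (hX.prodMk hV) hs, hmap, Measure.prod_apply hs]
    rfl
  rw [key]
  calc ∫⁻ u, (μ.map V) {v | x - u ≤ v} ∂(μ.map X)
      ≤ ∫⁻ u, ENNReal.ofReal (Real.exp (-(r * x)) * Real.exp (r * u)) ∂(μ.map X) := by
        apply lintegral_mono
        intro u
        dsimp only
        have h1 : (μ.map V) {v | x - u ≤ v} = μ {ω | x - u ≤ V ω} := by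
          rw [show {v : ℝ | x - u ≤ v} = Set.Ici (x - u) from rfl,
            Measure.map_apply hV measurableSet_Ici]
          rfl
        rw [h1]
        refine le_trans (htail (x - u)) (le_of_eq ?_)
        rw [← Real.exp_add]
        ring_nf
    _ = ENNReal.ofReal (Real.exp (-(r * x)))
        * ∫⁻ u, ENNReal.ofReal (Real.exp (r * u)) ∂(μ.map X) := by
        simp_rw [ENNReal.ofReal_mul (Real.exp_pos _).le]
        rw [lintegral_const_mul _ hexpmeas.ennreal_ofReal]
    _ = ENNReal.ofReal (Real.exp (-(r * x)))
        * ENNReal.ofReal (∫ u, Real.exp (r * u) ∂(μ.map X)) := by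
        rw [← ofReal_integral_eq_lintegral_ofReal hIntmap
          (ae_of_all _ fun u => (Real.exp_pos _).le)]
    _ = ENNReal.ofReal (Real.exp (-(r * x))) := by
        rw [integral_map hX.aemeasurable hexpmeas.aestronglyMeasurable, hXroot,
          ENNReal.ofReal_one, mul_one]

/-- From an exponential tail bound to a bound on the expected excess. -/
lemma tail_to_expectation {Ω : Type*} [MeasurableSpace Ω] (μ : Measure Ω) [IsProbabilityMeasure μ]
    (V : Ω → ℝ) (hVm : Measurable V) (hVnn : ∀ ω, 0 ≤ V ω) (hVint : Integrable V μ)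
    (r c : ℝ) (hr : 0 < r)
    (htail : ∀ x : ℝ, μ {ω | x ≤ V ω} ≤ ENNReal.ofReal (Real.exp (-(r * x)))) :
    ∫ ω, max (V ω - c) 0 ∂μ ≤ 4 / r * Real.exp (-(r / 2) * c) := by
  have hmono : ∀ (f : Ω → ℝ) (a : ℝ), (∀ t : ℝ, 0 < t → {ω | t < f ω} ⊆ {ω | a + t ≤ V ω}) →
      ∫ t in Set.Ioi (0:ℝ), (μ {ω | t < f ω}).toReal ≤ Real.exp (-(r * a)) / r := by
    intro f a hsub
    have hfeq : (fun t : ℝ => Real.exp (-(r * (a + t))))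
        = fun t => Real.exp (-(r * a)) * Real.exp (-r * t) := by
      funext t
      rw [← Real.exp_add]
      ring_nf
    have hInt : IntegrableOn (fun t : ℝ => Real.exp (-(r * (a + t)))) (Set.Ioi (0:ℝ)) := by
      rw [hfeq]
      exact (exp_neg_integrableOn_Ioi 0 hr).const_mul _
    calc ∫ t in Set.Ioi (0:ℝ), (μ {ω | t < f ω}).toReal
        ≤ ∫ t in Set.Ioi (0:ℝ), Real.exp (-(r * (a + t))) := by
          apply integral_mono_of_nonneg
          · exact ae_of_all _ fun t => ENNReal.toReal_nonneg
          · exact hInt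
          · rw [EventuallyLE, ae_restrict_iff' measurableSet_Ioi]
            refine ae_of_all _ fun t ht => ?_
            refine ENNReal.toReal_le_of_le_ofReal (Real.exp_nonneg _) ?_
            exact le_trans (measure_mono (hsub t ht)) (htail (a + t))
      _ = Real.exp (-(r * a)) / r := by
          rw [hfeq, MeasureTheory.integral_const_mul]
          have h0 := integral_comp_mul_left_Ioi (fun x => Real.exp (-x)) 0 hr
          rw [mul_zero] at h0
          have h0' : ∫ x : ℝ in Set.Ioi (0:ℝ), Real.exp (-(r * x)) = r⁻¹ := by
            simp only [smul_eq_mul] at h0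
            rw [show (fun x : ℝ => Real.exp (-(r*x))) = fun x : ℝ => Real.exp (-(r*x)) from rfl]
            calc ∫ x : ℝ in Set.Ioi (0:ℝ), Real.exp (-(r * x)) = r⁻¹ * ∫ x : ℝ in Set.Ioi (0:ℝ), Real.exp (-x) := h0
              _ = r⁻¹ := by rw [integral_exp_neg_Ioi_zero, mul_one]
          simp_rw [neg_mul] at h0' ⊢
          rw [h0']
          rw [div_eq_mul_inv]
  by_cases hc : 0 ≤ c
  · -- c nonnegative
    have hfm : Measurable fun ω => max (V ω - c) 0 := (hVm.sub_const c).max measurable_const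
    have hfint : Integrable (fun ω => max (V ω - c) 0) μ := by
      refine hVint.mono hfm.aestronglyMeasurable (ae_of_all _ fun ω => ?_)
      rw [Real.norm_eq_abs, Real.norm_eq_abs, abs_of_nonneg (le_max_right _ _),
        abs_of_nonneg (hVnn ω)]
      exact max_le (by linarith [hVnn ω]) (hVnn ω)
    rw [hfint.integral_eq_integral_meas_lt (ae_of_all _ fun ω => le_max_right _ _)]
    have hb := hmono (fun ω => max (V ω - c) 0) c (by
      intro t ht ω hω
      simp only [Set.mem_setOf_eq] at hω ⊢
      rcases lt_max_iff.mp hω with h | h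
      · linarith
      · linarith)
    refine le_trans hb ?_
    have h1 : Real.exp (-(r * c)) ≤ Real.exp (-(r / 2) * c) :=
      Real.exp_le_exp.mpr (by nlinarith)
    rw [div_le_iff₀ hr]
    have h2 := Real.exp_pos (-(r / 2) * c)
    have h3 : 4 / r * Real.exp (-(r / 2) * c) * r = 4 * Real.exp (-(r / 2) * c) := by
      field_simp
    rw [h3]
    nlinarith
  · -- c negative
    push_neg at hc
    have heq : (fun ω => max (V ω - c) 0) = fun ω => V ω - c :=
      funext fun ω => max_eq_left (by linarith [hVnn ω])
    rw [heq, integral_sub hVint (integrable_const c), integral_const, probReal_univ,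
      one_smul]
    have hEV : ∫ ω, V ω ∂μ ≤ 1 / r := by
      rw [hVint.integral_eq_integral_meas_lt (ae_of_all _ fun ω => hVnn ω)]
      have hb := hmono V 0 (by
        intro t ht ω hω
        simp only [Set.mem_setOf_eq] at hω ⊢
        linarith)
      rw [mul_zero, neg_zero, Real.exp_zero] at hb
      exact hb
    have hexp := Real.add_one_le_exp (-(r / 2) * c)
    have h4 : 4 / r * (-(r / 2) * c + 1) ≤ 4 / r * Real.exp (-(r / 2) * c) := by
      apply mul_le_mul_of_nonneg_left hexp
      positivity
    have h5 : 4 / r * (-(r / 2) * c + 1) = 4 / r - 2 * c := by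
      field_simp
      ring
    have h14 : (1:ℝ) / r ≤ 4 / r := by
      apply (div_le_div_iff_of_pos_right hr).mpr
      norm_num
    linarith

/-- Bound on the expected energy discarded by battery overflow: with finite battery
capacity `B > 0`, energy-arrival rate `λe = E[Z 1] < P` and `r* > 0` a positive root
of the cumulant generating function of `Z 1 - P`, the expected energy discarded in
slot `t ≥ 1` satisfies
`E[max (S (t-1) + Z t - P·1{S (t-1) ≥ P} - B) 0] ≤ (4/r*) exp(-(r*/2)(B - 2P))`. -/
theorem battery_overflow_bound
    {Ω : Type*} [MeasurableSpace Ω] (μ : Measure Ω) [IsProbabilityMeasure μ]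
    (Z : ℕ → Ω → ℝ)
    (hmeas : ∀ t, Measurable (Z t))
    (hindep : iIndepFun Z μ)
    (hident : ∀ i j, 1 ≤ i → 1 ≤ j → IdentDistrib (Z i) (Z j) μ μ)
    (hnonneg : ∀ t ω, 0 ≤ Z t ω)
    (hZint : Integrable (Z 1) μ)
    (lamE P B : ℝ) (hlamE : lamE = ∫ ω, Z 1 ω ∂μ) (hP : 0 < P) (hB : 0 < B)
    (hlt : lamE < P)
    (S : ℕ → Ω → ℝ)
    (hS0 : ∀ ω, S 0 ω = 0)
    (hS : ∀ t ω, S (t + 1) ω =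
      min (S t ω + Z (t + 1) ω - (if P ≤ S t ω then P else 0)) B)
    (rstar : ℝ) (hrstar : 0 < rstar)
    (hint : Integrable (fun ω => Real.exp (rstar * (Z 1 ω - P))) μ)
    (hroot : ∫ ω, Real.exp (rstar * (Z 1 ω - P)) ∂μ = 1) :
    ∀ t : ℕ,
      ∫ ω, max (S t ω + Z (t + 1) ω - (if P ≤ S t ω then P else 0) - B) 0 ∂μ
        ≤ (4 / rstar) * Real.exp (-(rstar / 2) * (B - 2 * P)) := by
  classical
  set L : ℕ → Ω → ℝ := fun t ω => lindleyFun P t (fun i => Z i ω) with hLdef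
  have hLrec : ∀ t ω, L (t+1) ω = max (L t ω + (Z (t+1) ω - P)) 0 := fun t ω => rfl
  have hL0 : ∀ ω, L 0 ω = 0 := fun ω => rfl
  have hLnn : ∀ t ω, 0 ≤ L t ω := fun t ω => lindleyFun_nonneg P t _
  have hLmeas : ∀ t, Measurable (L t) :=
    fun t => (lindleyFun_measurable P t).comp (measurable_pi_lambda _ fun i => hmeas i)
  have hZint' : ∀ i : ℕ, Integrable (Z (i+1)) μ :=
    fun i => (hident (i+1) 1 (Nat.le_add_left 1 i) le_rfl).integrable_iff.mpr hZint
  have hLsum : ∀ t ω, L t ω ≤ ∑ i ∈ Finset.range t, Z (i+1) ω := by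
    intro t
    induction t with
    | zero => intro ω; rw [hL0, Finset.sum_range_zero]
    | succ t ih =>
        intro ω
        rw [hLrec, Finset.sum_range_succ]
        refine max_le (by linarith [ih ω]) ?_
        exact add_nonneg (Finset.sum_nonneg fun i _ => hnonneg _ ω) (hnonneg _ ω)
  have hLint : ∀ t, Integrable (L t) μ := by
    intro t
    refine (integrable_finset_sum (Finset.range t) fun i _ => hZint' i).mono
      (hLmeas t).aestronglyMeasurable (ae_of_all _ fun ω => ?_)
    rw [Real.norm_eq_abs, abs_of_nonneg (hLnn t ω), Real.norm_eq_abs,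
      abs_of_nonneg (Finset.sum_nonneg fun i _ => hnonneg _ ω)]
    exact hLsum t ω
  -- identically distributed exponential moments
  have humeas : Measurable fun x : ℝ => Real.exp (rstar * (x - P)) :=
    Real.measurable_exp.comp ((measurable_id.sub_const P).const_mul rstar)
  have hidt : ∀ t : ℕ, IdentDistrib (fun ω => Real.exp (rstar * (Z (t+1) ω - P)))
      (fun ω => Real.exp (rstar * (Z 1 ω - P))) μ μ :=
    fun t => (hident (t+1) 1 (Nat.le_add_left 1 t) le_rfl).comp humeas
  have hXint : ∀ t : ℕ, Integrable (fun ω => Real.exp (rstar * (Z (t+1) ω - P))) μ :=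
    fun t => (hidt t).integrable_iff.mpr hint
  have hXroot : ∀ t : ℕ, ∫ ω, Real.exp (rstar * (Z (t+1) ω - P)) ∂μ = 1 :=
    fun t => (hidt t).integral_eq.trans hroot
  have hindepL : ∀ t, IndepFun (L t) (fun ω => Z (t+1) ω - P) μ := by
    intro t
    have h := (lindley_indep P Z hmeas hindep t).comp measurable_id
      (measurable_id.sub_const P)
    exact h
  have htriv : ∀ (s : Set Ω) (x : ℝ), x ≤ 0 →
      μ s ≤ ENNReal.ofReal (Real.exp (-(rstar * x))) := by
    intro s x hx
    refine le_trans prob_le_one ?_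
    refine ENNReal.one_le_ofReal.mpr (Real.one_le_exp ?_)
    nlinarith
  have htail : ∀ t (x : ℝ), μ {ω | x ≤ L t ω} ≤ ENNReal.ofReal (Real.exp (-(rstar * x))) := by
    intro t
    induction t with
    | zero =>
        intro x
        by_cases hx : x ≤ 0
        · exact htriv _ _ hx
        · have hempty : {ω | x ≤ L 0 ω} = ∅ := by
            ext ω
            simp only [Set.mem_setOf_eq, hL0, Set.mem_empty_iff_false, iff_false, not_le]
            linarith [not_le.mp hx]
          rw [hempty, measure_empty]
          exact zero_le
    | succ t ih =>
        intro x
        by_cases hx : x ≤ 0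
        · exact htriv _ _ hx
        · have hstep := tail_step μ (L t) (fun ω => Z (t+1) ω - P) (hLmeas t)
            ((hmeas (t+1)).sub_const P) (hindepL t) rstar hrstar (hXint t) (hXroot t) ih x
          have hseteq : {ω | x ≤ L (t+1) ω} = {ω | x ≤ L t ω + (Z (t+1) ω - P)} := by
            ext ω
            simp only [Set.mem_setOf_eq, hLrec]
            rw [le_max_iff]
            exact ⟨fun h => h.resolve_right hx, fun h => Or.inl h⟩
          rw [hseteq]
          exact hstep
  -- pointwise bound of S by L
  have hSle : ∀ t ω, S t ω ≤ L t ω + 2 * P := by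
    intro t
    induction t with
    | zero => intro ω; rw [hS0]; linarith [hLnn 0 ω]
    | succ t ih =>
        intro ω
        rw [hS t ω]
        refine le_trans (min_le_left _ _) ?_
        rw [hLrec]
        by_cases h : P ≤ S t ω
        · rw [if_pos h]
          have := le_max_left (L t ω + (Z (t+1) ω - P)) 0
          linarith [ih ω]
        · rw [if_neg h]
          push_neg at h
          have := le_max_left (L t ω + (Z (t+1) ω - P)) 0
          have := hLnn t ω
          linarith
  have hSB : ∀ t ω, S t ω ≤ B := by
    intro t ω
    cases t with
    | zero => rw [hS0]; exact hB.le
    | succ t => rw [hS t ω]; exact min_le_right _ _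
  have hSmeas : ∀ t, Measurable (S t) := by
    intro t
    induction t with
    | zero =>
        have : S 0 = fun _ => (0:ℝ) := funext hS0
        rw [this]; exact measurable_const
    | succ t ih =>
        have : S (t+1) = fun ω => min (S t ω + Z (t+1) ω - (if P ≤ S t ω then P else 0)) B :=
          funext (hS t)
        rw [this]
        exact ((ih.add (hmeas (t+1))).sub
          (Measurable.ite (measurableSet_le measurable_const ih)
            measurable_const measurable_const)).min measurable_const
  intro t
  have key : ∀ ω, S t ω + Z (t+1) ω - (if P ≤ S t ω then P else 0) ≤ L (t+1) ω + 2 * P := by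
    intro ω
    rw [hLrec]
    by_cases h : P ≤ S t ω
    · rw [if_pos h]
      have := le_max_left (L t ω + (Z (t+1) ω - P)) 0
      linarith [hSle t ω]
    · rw [if_neg h]
      push_neg at h
      have := le_max_left (L t ω + (Z (t+1) ω - P)) 0
      have := hLnn t ω
      linarith
  have hiteMeas : Measurable (fun ω => if P ≤ S t ω then P else (0:ℝ)) :=
    Measurable.ite (measurableSet_le measurable_const (hSmeas t)) measurable_const
      measurable_const
  have hDmeas : Measurable (fun ω =>
      max (S t ω + Z (t+1) ω - (if P ≤ S t ω then P else 0) - B) 0) :=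
    ((((hSmeas t).add (hmeas (t+1))).sub hiteMeas).sub_const B).max measurable_const
  have hDle : ∀ ω, max (S t ω + Z (t+1) ω - (if P ≤ S t ω then P else 0) - B) 0 ≤ Z (t+1) ω := by
    intro ω
    refine max_le ?_ (hnonneg _ _)
    have := hSB t ω
    split_ifs with h <;> linarith
  have hDint : Integrable (fun ω =>
      max (S t ω + Z (t+1) ω - (if P ≤ S t ω then P else 0) - B) 0) μ := by
    refine (hZint' t).mono hDmeas.aestronglyMeasurable (ae_of_all _ fun ω => ?_)
    rw [Real.norm_eq_abs, Real.norm_eq_abs, abs_of_nonneg (le_max_right _ _),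
      abs_of_nonneg (hnonneg (t+1) ω)]
    exact hDle ω
  have hMint : Integrable (fun ω => max (L (t+1) ω - (B - 2 * P)) 0) μ := by
    refine ((hLint (t+1)).add (integrable_const |B - 2 * P|)).mono
      (((hLmeas (t+1)).sub_const _).max measurable_const).aestronglyMeasurable
      (ae_of_all _ fun ω => ?_)
    rw [Real.norm_eq_abs, abs_of_nonneg (le_max_right _ _), Real.norm_eq_abs]
    have h1 : L (t+1) ω - (B - 2 * P) ≤ L (t+1) ω + |B - 2 * P| := by
      have := neg_abs_le (B - 2 * P); linarith
    have h2 : (0:ℝ) ≤ L (t+1) ω + |B - 2 * P| := add_nonneg (hLnn _ _) (abs_nonneg _)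
    simp only [Pi.add_apply]
    rw [abs_of_nonneg h2]
    exact max_le h1 h2
  have hmain := tail_to_expectation μ (L (t+1)) (hLmeas (t+1)) (fun ω => hLnn _ ω)
    (hLint (t+1)) rstar (B - 2 * P) hrstar (htail (t+1))
  refine le_trans ?_ hmain
  apply integral_mono hDint hMint
  intro ω
  refine max_le_max ?_ le_rfl
  have := key ω
  linarith
end

section
/- Assume λ_e > P, B > 0, and that there exists r* < 0 with E[exp(r*·(Z_1 − P))] = 1. Then for every x ∈ [0, B], limsup_{n→∞} (1/n)·Σ_{t=1}^n Pr(S_t < x) ≤ exp(r*·(B − x)). -/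
open MeasureTheory ProbabilityTheory Filter Finset
open scoped Topology

set_option linter.unusedSectionVars false
set_option maxHeartbeats 1000000




section Helpers
variable {Ω : Type*} [MeasurableSpace Ω] {μ : Measure Ω} [IsProbabilityMeasure μ]
  {Z : ℕ → Ω → ℝ} {P rstar : ℝ}

lemma indepFun_blocks (hmeas : ∀ t, Measurable (Z t))
    (hindep : iIndepFun Z μ)
    {A B : Set ℕ} (hAB : Disjoint A B) {F G : Ω → ℝ}
    (hF : Measurable[⨆ i ∈ A, MeasurableSpace.comap (Z i) (inferInstance : MeasurableSpace ℝ)] F)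
    (hG : Measurable[⨆ i ∈ B, MeasurableSpace.comap (Z i) (inferInstance : MeasurableSpace ℝ)] G) :
    IndepFun F G μ := by
  rw [IndepFun_iff_Indep]
  refine indep_of_indep_of_le_left (indep_of_indep_of_le_right ?_ hG.comap_le) hF.comap_le
  exact indep_iSup_of_disjoint (fun i => (hmeas i).comap_le) ((iIndepFun_iff_iIndep _ _ _).mp hindep) hAB

lemma measurable_block {A : Set ℕ} {u : ℕ} (hu : u ∈ A) :
    Measurable[⨆ i ∈ A, MeasurableSpace.comap (Z i) (inferInstance : MeasurableSpace ℝ)] (Z u) :=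
  Measurable.of_comap_le (le_biSup (fun i => MeasurableSpace.comap (Z i) (inferInstance : MeasurableSpace ℝ)) hu)

lemma measurable_blockW {A : Set ℕ} {T : Finset ℕ} (hT : ∀ u ∈ T, u ∈ A) :
    Measurable[⨆ i ∈ A, MeasurableSpace.comap (Z i) (inferInstance : MeasurableSpace ℝ)]
      (fun ω => ∑ u ∈ T, (Z u ω - P)) :=
  Finset.measurable_sum _ (fun u hu => (measurable_block (hT u hu)).sub measurable_const)

lemma exp_factor_le (hnonneg : ∀ t ω, 0 ≤ Z t ω) (hrstar : rstar < 0) (u : ℕ) (ω : Ω) :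
    Real.exp (rstar * (Z u ω - P)) ≤ Real.exp (-(rstar * P)) := by
  apply Real.exp_le_exp.mpr
  nlinarith [hnonneg u ω]

lemma exp_factor_pos (u : ℕ) (ω : Ω) : 0 < Real.exp (rstar * (Z u ω - P)) := Real.exp_pos _

lemma integrable_prod_exp (hmeas : ∀ t, Measurable (Z t))
    (hnonneg : ∀ t ω, 0 ≤ Z t ω) (hrstar : rstar < 0) (A : Finset ℕ) :
    Integrable (fun ω => ∏ u ∈ A, Real.exp (rstar * (Z u ω - P))) μ := by
  refine (integrable_const (Real.exp (-(rstar * P)) ^ A.card)).mono'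
    ((Finset.measurable_prod _ (fun u _ => ((hmeas u).sub measurable_const).const_mul rstar |>.exp)).aestronglyMeasurable)
    (Filter.Eventually.of_forall (fun ω => ?_))
  rw [Real.norm_eq_abs, abs_of_nonneg (Finset.prod_nonneg fun u _ => (exp_factor_pos u ω).le)]
  calc ∏ u ∈ A, Real.exp (rstar * (Z u ω - P)) ≤ ∏ _u ∈ A, Real.exp (-(rstar * P)) :=
        Finset.prod_le_prod (fun u _ => (exp_factor_pos u ω).le)
          (fun u _ => exp_factor_le hnonneg hrstar u ω)
    _ = Real.exp (-(rstar * P)) ^ A.card := by rw [Finset.prod_const]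

lemma integral_exp_one (hident : ∀ i j, 1 ≤ i → 1 ≤ j → IdentDistrib (Z i) (Z j) μ μ)
    (hroot : ∫ ω, Real.exp (rstar * (Z 1 ω - P)) ∂μ = 1) {u : ℕ} (hu : 1 ≤ u) :
    ∫ ω, Real.exp (rstar * (Z u ω - P)) ∂μ = 1 := by
  rw [← hroot]
  exact ((hident u 1 hu le_rfl).comp
    (measurable_const.mul (measurable_id.sub measurable_const) |>.exp
      : Measurable fun z : ℝ => Real.exp (rstar * (z - P)))).integral_eq

lemma integral_prod_exp (hmeas : ∀ t, Measurable (Z t))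
    (hindep : iIndepFun Z μ)
    (hnonneg : ∀ t ω, 0 ≤ Z t ω) (hrstar : rstar < 0)
    (hident : ∀ i j, 1 ≤ i → 1 ≤ j → IdentDistrib (Z i) (Z j) μ μ)
    (hroot : ∫ ω, Real.exp (rstar * (Z 1 ω - P)) ∂μ = 1)
    (A : Finset ℕ) (hA : ∀ u ∈ A, 1 ≤ u) :
    ∫ ω, ∏ u ∈ A, Real.exp (rstar * (Z u ω - P)) ∂μ = 1 := by
  classical
  induction A using Finset.induction_on with
  | empty => simp
  | @insert a A ha ih =>
    have hA' : ∀ u ∈ A, 1 ≤ u := fun u hu => hA u (Finset.mem_insert_of_mem hu)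
    have ha1 : 1 ≤ a := hA a (Finset.mem_insert_self a A)
    simp only [Finset.prod_insert ha]
    have hAB : Disjoint ({a} : Set ℕ) (↑A : Set ℕ) := by
      simpa [Set.disjoint_singleton_left] using ha
    have hFG : IndepFun (fun ω => Real.exp (rstar * (Z a ω - P)))
        (fun ω => ∏ u ∈ A, Real.exp (rstar * (Z u ω - P))) μ := by
      refine indepFun_blocks hmeas hindep hAB ?_ ?_
      · exact (((measurable_block (Set.mem_singleton a)).sub measurable_const).const_mul
          rstar).exp
      · exact Finset.measurable_prod _ (fun u hu =>
          (((measurable_block (by exact_mod_cast hu)).sub measurable_const).const_mul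
            rstar).exp)
    have hm := hFG.integral_fun_mul_eq_mul_integral
        (by simpa using integrable_prod_exp (μ := μ) hmeas hnonneg hrstar {a} :
          Integrable (fun ω => Real.exp (rstar * (Z a ω - P))) μ).aestronglyMeasurable
        (integrable_prod_exp hmeas hnonneg hrstar A).aestronglyMeasurable
    exact hm.trans (by rw [integral_exp_one hident hroot ha1, ih hA', one_mul])
lemma ville (hmeas : ∀ t, Measurable (Z t))
    (hindep : iIndepFun Z μ)
    (hnonneg : ∀ t ω, 0 ≤ Z t ω) (hrstar : rstar < 0)
    (hident : ∀ i j, 1 ≤ i → 1 ≤ j → IdentDistrib (Z i) (Z j) μ μ)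
    (hroot : ∫ ω, Real.exp (rstar * (Z 1 ω - P)) ∂μ = 1)
    (t : ℕ) (c : ℝ) :
    (μ (⋃ s ∈ Finset.Ioc 0 (t-1),
        {ω | ∑ u ∈ Finset.Ioc s t, (Z u ω - P) < c})).toReal
      ≤ Real.exp (-(rstar * c)) := by
  classical
  set W : ℕ → Ω → ℝ := fun s ω => ∑ u ∈ Finset.Ioc s t, (Z u ω - P) with hW
  have hWmeas : ∀ s, Measurable (W s) := fun s =>
    Finset.measurable_sum _ fun u _ => (hmeas u).sub measurable_const
  -- the exp(rstar * W s) functions as products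
  have hprodeq : ∀ s : ℕ, (fun ω => Real.exp (rstar * W s ω))
      = fun ω => ∏ u ∈ Finset.Ioc s t, Real.exp (rstar * (Z u ω - P)) := by
    intro s; funext ω; rw [hW]; rw [Finset.mul_sum, Real.exp_sum]
  have hEint : ∀ s, Integrable (fun ω => Real.exp (rstar * W s ω)) μ := by
    intro s; rw [hprodeq s]; exact integrable_prod_exp hmeas hnonneg hrstar _
  have hEone : ∀ s, Integrable ((fun ω => Real.exp (rstar * ∑ u ∈ Finset.Ioc (0:ℕ) s, (Z u ω - P)))) μ := by
    intro s
    have : (fun ω => Real.exp (rstar * ∑ u ∈ Finset.Ioc (0:ℕ) s, (Z u ω - P)))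
        = fun ω => ∏ u ∈ Finset.Ioc (0:ℕ) s, Real.exp (rstar * (Z u ω - P)) := by
      funext ω; rw [Finset.mul_sum, Real.exp_sum]
    rw [this]; exact integrable_prod_exp hmeas hnonneg hrstar _
  set G : ℕ → Set Ω := fun s =>
    {ω | W s ω < c} ∩ ⋂ s' ∈ Finset.Ioc s (t-1), {ω | c ≤ W s' ω} with hG
  have hGmeas : ∀ s, MeasurableSet (G s) := fun s =>
    (measurableSet_lt (hWmeas s) measurable_const).inter
      (MeasurableSet.iInter fun s' => MeasurableSet.iInter fun _ =>
        measurableSet_le measurable_const (hWmeas s'))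
  have key : ∀ s s', s < s' → s' ≤ t - 1 → Disjoint (G s) (G s') := by
    intro s s' h hs'
    rw [Set.disjoint_left]
    rintro ω ⟨h1, h2⟩ ⟨h3, h4⟩
    have h5 : c ≤ W s' ω := Set.mem_iInter₂.mp h2 s' (Finset.mem_Ioc.mpr ⟨h, hs'⟩)
    exact absurd (show W s' ω < c from h3) (not_lt.mpr h5)
  have hdisj : (↑(Finset.Ioc 0 (t-1)) : Set ℕ).PairwiseDisjoint G := by
    intro s hs s' hs' hne
    rcases hne.lt_or_gt with h | h
    · exact key s s' h (Finset.mem_Ioc.mp (Finset.mem_coe.mp hs')).2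
    · exact (key s' s h (Finset.mem_Ioc.mp (Finset.mem_coe.mp hs)).2).symm
  have hunion : (⋃ s ∈ Finset.Ioc 0 (t-1), {ω | W s ω < c})
      = ⋃ s ∈ Finset.Ioc 0 (t-1), G s := by
    apply Set.Subset.antisymm
    · intro ω hω
      simp only [Set.mem_iUnion] at hω ⊢
      obtain ⟨s, hs, hsω⟩ := hω
      obtain ⟨hs0, hst⟩ := Finset.mem_Ioc.mp hs
      refine ⟨Nat.findGreatest (fun s => W s ω < c) (t-1),
        Finset.mem_Ioc.mpr ⟨lt_of_lt_of_le hs0 (Nat.le_findGreatest hst hsω),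
          Nat.findGreatest_le _⟩,
        Nat.findGreatest_spec (P := fun s => W s ω < c) hst hsω, ?_⟩
      refine Set.mem_iInter₂.mpr fun s' hs' => ?_
      obtain ⟨h1, h2⟩ := Finset.mem_Ioc.mp hs'
      exact not_lt.mp (Nat.findGreatest_is_greatest (P := fun s => W s ω < c) h1 h2)
    · exact Set.iUnion₂_mono fun s _ => Set.inter_subset_left
  have hmeasU : μ (⋃ s ∈ Finset.Ioc 0 (t-1), G s)
      = ∑ s ∈ Finset.Ioc 0 (t-1), μ (G s) :=
    measure_biUnion_finset hdisj (fun s _ => hGmeas s)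
  -- per-s estimate
  have hkey : ∀ s ∈ Finset.Ioc 0 (t-1),
      Real.exp (rstar * c) * (μ (G s)).toReal
        ≤ ∫ ω in G s, Real.exp (rstar * W 0 ω) ∂μ := by
    intro s hs
    obtain ⟨hs0, hst1⟩ := Finset.mem_Ioc.mp hs
    have hst : s ≤ t := le_trans hst1 (Nat.sub_le t 1)
    set X : Ω → ℝ := fun ω => Real.exp (rstar * ∑ u ∈ Finset.Ioc (0:ℕ) s, (Z u ω - P)) with hX
    set Y : Ω → ℝ := (G s).indicator (fun ω => Real.exp (rstar * W s ω)) with hY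
    have hXY : ∀ ω, X ω * Y ω
        = (G s).indicator (fun ω => Real.exp (rstar * W 0 ω)) ω := by
      intro ω
      by_cases hω : ω ∈ G s
      · rw [hY]
        simp only [Set.indicator_of_mem hω]
        rw [hX, hW, ← Real.exp_add, ← mul_add,
          Finset.sum_Ioc_consecutive _ (Nat.zero_le s) hst]
      · rw [hY]; simp [Set.indicator_of_notMem hω]
    -- independence
    have hWb : ∀ s', s ≤ s' → Measurable[⨆ i ∈ Set.Ioc s t,
        MeasurableSpace.comap (Z i) (inferInstance : MeasurableSpace ℝ)] (W s') := by
      intro s' h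
      exact measurable_blockW fun u hu =>
        ⟨lt_of_le_of_lt h (Finset.mem_Ioc.mp hu).1, (Finset.mem_Ioc.mp hu).2⟩
    have hindepXY : IndepFun X Y μ := by
      refine indepFun_blocks hmeas hindep (A := Set.Ioc 0 s) (B := Set.Ioc s t) ?_ ?_ ?_
      · rw [Set.disjoint_left]; rintro u ⟨_, h1⟩ ⟨h2, _⟩; omega
      · exact ((measurable_blockW fun u hu => by
          simpa [Set.mem_Ioc] using Finset.mem_Ioc.mp hu).const_mul rstar).exp
      · refine Measurable.indicator (((hWb s le_rfl).const_mul rstar).exp) ?_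
        refine (measurableSet_lt (hWb s le_rfl) measurable_const).inter ?_
        exact MeasurableSet.iInter fun s' => MeasurableSet.iInter fun hs' =>
          measurableSet_le measurable_const
            (hWb s' (le_of_lt (Finset.mem_Ioc.mp hs').1))
    have hYint : Integrable Y μ := (hEint s).indicator (hGmeas s)
    have h1 : ∫ ω, X ω * Y ω ∂μ = (∫ ω, X ω ∂μ) * ∫ ω, Y ω ∂μ :=
      hindepXY.integral_fun_mul_eq_mul_integral (hEone s).aestronglyMeasurable hYint.aestronglyMeasurable
    have hX1 : ∫ ω, X ω ∂μ = 1 := by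
      rw [hX]
      have : (fun ω => Real.exp (rstar * ∑ u ∈ Finset.Ioc (0:ℕ) s, (Z u ω - P)))
          = fun ω => ∏ u ∈ Finset.Ioc (0:ℕ) s, Real.exp (rstar * (Z u ω - P)) := by
        funext ω; rw [Finset.mul_sum, Real.exp_sum]
      rw [this]
      exact integral_prod_exp hmeas hindep hnonneg hrstar hident hroot _
        (fun u hu => (Finset.mem_Ioc.mp hu).1)
    have lhs_eq : ∫ ω in G s, Real.exp (rstar * W 0 ω) ∂μ = ∫ ω, X ω * Y ω ∂μ := by
      rw [← integral_indicator (hGmeas s)]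
      exact integral_congr_ae (Filter.Eventually.of_forall fun ω => (hXY ω).symm)
    rw [lhs_eq, h1, hX1, one_mul, hY, integral_indicator (hGmeas s)]
    have hmono : ∫ ω in G s, Real.exp (rstar * c) ∂μ
        ≤ ∫ ω in G s, Real.exp (rstar * W s ω) ∂μ := by
      refine setIntegral_mono_on (f := fun _ => Real.exp (rstar * c))
        (hf := integrableOn_const (measure_ne_top μ _))
        (hg := (hEint s).integrableOn) (hGmeas s) ?_
      intro ω hω
      exact Real.exp_le_exp.mpr (mul_le_mul_of_nonpos_left hω.1.le hrstar.le)
    calc Real.exp (rstar * c) * (μ (G s)).toReal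
        = ∫ _ω in G s, Real.exp (rstar * c) ∂μ := by
          rw [setIntegral_const, smul_eq_mul, Measure.real_def, mul_comm]
      _ ≤ _ := hmono
  -- summation
  have hUint : IntegrableOn (fun ω => Real.exp (rstar * W 0 ω))
      (⋃ s ∈ Finset.Ioc 0 (t-1), G s) μ := (hEint 0).integrableOn
  have hsplit : ∫ ω in ⋃ s ∈ Finset.Ioc 0 (t-1), G s, Real.exp (rstar * W 0 ω) ∂μ
      = ∑ s ∈ Finset.Ioc 0 (t-1), ∫ ω in G s, Real.exp (rstar * W 0 ω) ∂μ :=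
    integral_biUnion_finset _ (fun s _ => hGmeas s) hdisj (fun s _ => (hEint 0).integrableOn)
  have htotal : ∫ ω in ⋃ s ∈ Finset.Ioc 0 (t-1), G s, Real.exp (rstar * W 0 ω) ∂μ
      ≤ 1 := by
    have h2 : ∫ ω, Real.exp (rstar * W 0 ω) ∂μ = 1 := by
      rw [hprodeq 0]
      exact integral_prod_exp hmeas hindep hnonneg hrstar hident hroot _
        (fun u hu => (Finset.mem_Ioc.mp hu).1)
    calc ∫ ω in ⋃ s ∈ Finset.Ioc 0 (t-1), G s, Real.exp (rstar * W 0 ω) ∂μ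
        ≤ ∫ ω, Real.exp (rstar * W 0 ω) ∂μ :=
          setIntegral_le_integral (hEint 0)
            (Filter.Eventually.of_forall fun ω => (Real.exp_pos _).le)
      _ = 1 := h2
  -- combine
  have hfin : ∀ s ∈ Finset.Ioc 0 (t-1), μ (G s) ≠ ⊤ := fun s _ => measure_ne_top μ _
  have hmain : Real.exp (rstar * c)
      * (μ (⋃ s ∈ Finset.Ioc 0 (t-1), {ω | W s ω < c})).toReal ≤ 1 := by
    rw [hunion, hmeasU, ENNReal.toReal_sum hfin, Finset.mul_sum]
    calc ∑ s ∈ Finset.Ioc 0 (t-1), Real.exp (rstar * c) * (μ (G s)).toReal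
        ≤ ∑ s ∈ Finset.Ioc 0 (t-1), ∫ ω in G s, Real.exp (rstar * W 0 ω) ∂μ :=
          Finset.sum_le_sum hkey
      _ = _ := hsplit.symm
      _ ≤ 1 := htotal
  have hpos : (0:ℝ) < Real.exp (rstar * c) := Real.exp_pos _
  rw [Real.exp_neg, ← one_div]
  rw [le_div_iff₀ hpos]
  linarith [hmain]
lemma battery_le {B : ℝ} (hB : 0 < B)
    {S : ℕ → Ω → ℝ} (hS0 : ∀ ω, S 0 ω = 0)
    (hS : ∀ t ω, S (t + 1) ω =
      min (S t ω + Z (t + 1) ω - (if P ≤ S t ω then P else 0)) B)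
    (ω : Ω) : ∀ u, S u ω ≤ B := by
  intro u
  cases u with
  | zero => rw [hS0]; exact hB.le
  | succ v => rw [hS]; exact min_le_right _ _

lemma battery_growth {P : ℝ} (hP : 0 < P) {B : ℝ}
    {S : ℕ → Ω → ℝ}
    (hS : ∀ t ω, S (t + 1) ω =
      min (S t ω + Z (t + 1) ω - (if P ≤ S t ω then P else 0)) B)
    (ω : Ω) (s t : ℕ) (hst : s ≤ t) :
    (∀ u, s < u → u ≤ t → S u ω < B) →
      S s ω + ∑ u ∈ Finset.Ioc s t, (Z u ω - P) ≤ S t ω := by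
  induction t, hst using Nat.le_induction with
  | base => intro _; simp
  | succ t hst ih =>
    intro h
    have hlt : S (t+1) ω < B := h (t+1) (by omega) le_rfl
    have heq : S (t+1) ω = S t ω + Z (t+1) ω - (if P ≤ S t ω then P else 0) := by
      have := hS t ω
      rcases min_cases (S t ω + Z (t + 1) ω - (if P ≤ S t ω then P else 0)) B with
        ⟨h1, _⟩ | ⟨h1, h2⟩
      · rw [this, h1]
      · rw [this] at hlt ⊢; rw [h1] at hlt ⊢; exact absurd hlt (lt_irrefl B)
    have hind : (if P ≤ S t ω then P else 0) ≤ P := by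
      split <;> [exact le_rfl; exact hP.le]
    have ih' := ih (fun u hu1 hu2 => h u hu1 (by omega))
    rw [Finset.sum_Ioc_succ_top hst]
    have : S t ω + (Z (t+1) ω - P) ≤ S (t+1) ω := by
      rw [heq]; linarith
    linarith
lemma pathwise {P : ℝ} (hP : 0 < P) {B : ℝ} (hB : 0 < B)
    {S : ℕ → Ω → ℝ} (hS0 : ∀ ω, S 0 ω = 0)
    (hS : ∀ t ω, S (t + 1) ω =
      min (S t ω + Z (t + 1) ω - (if P ≤ S t ω then P else 0)) B)
    {x : ℝ} (hxB : x ≤ B) {t : ℕ} (ht : 1 ≤ t) {ω : Ω} (h : S t ω < x) :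
    (∃ s ∈ Finset.Ioc 0 (t-1), ∑ u ∈ Finset.Ioc s t, (Z u ω - P) < x - B) ∨
      ∑ u ∈ Finset.Ioc 0 t, (Z u ω - P) < x := by
  classical
  have hle := battery_le (Z := Z) (P := P) hB hS0 hS ω
  have hSt : S t ω < B := lt_of_lt_of_le h hxB
  by_cases hex : ∃ s, s ≤ t ∧ S s ω = B
  · left
    obtain ⟨s₁, hs₁t, hs₁B⟩ := hex
    set s₀ := Nat.findGreatest (fun s => S s ω = B) t with hs₀def
    have hspec : S s₀ ω = B :=
      Nat.findGreatest_spec (P := fun s => S s ω = B) hs₁t hs₁B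
    have hs₀t : s₀ ≤ t := Nat.findGreatest_le t
    have hs₀ne : s₀ ≠ t := fun hc => by rw [hc] at hspec; exact absurd hspec (ne_of_lt hSt)
    have hs₀lt : s₀ < t := lt_of_le_of_ne hs₀t hs₀ne
    have hs₀pos : 0 < s₀ := by
      rcases Nat.eq_zero_or_pos s₀ with h' | h'
      · rw [h'] at hspec; rw [hS0] at hspec; exact absurd hspec.symm (ne_of_gt hB)
      · exact h'
    have hgrow := battery_growth (P := P) hP hS ω s₀ t hs₀t (fun u hu1 hu2 => by
      have : S u ω ≠ B := Nat.findGreatest_is_greatest (P := fun s => S s ω = B) hu1 hu2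
      exact lt_of_le_of_ne (hle u) this)
    refine ⟨s₀, Finset.mem_Ioc.mpr ⟨hs₀pos, by omega⟩, ?_⟩
    rw [hspec] at hgrow
    linarith
  · right
    push_neg at hex
    have hgrow := battery_growth (P := P) hP hS ω 0 t (Nat.zero_le t) (fun u hu1 hu2 =>
      lt_of_le_of_ne (hle u) (hex u hu2))
    rw [hS0] at hgrow
    linarith

lemma tendsto_tail (hmeas : ∀ t, Measurable (Z t))
    (hindep : iIndepFun Z μ)
    (hident : ∀ i j, 1 ≤ i → 1 ≤ j → IdentDistrib (Z i) (Z j) μ μ)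
    (hZint : Integrable (Z 1) μ) {lamE : ℝ} (hlamE : lamE = ∫ ω, Z 1 ω ∂μ)
    (hgt : P < lamE) (x : ℝ) :
    Tendsto (fun t : ℕ =>
        (μ {ω | ∑ u ∈ Finset.Ioc 0 t, (Z u ω - P) < x}).toReal) atTop (𝓝 0) := by
  have hmeasW : ∀ t : ℕ, Measurable (fun ω => ∑ u ∈ Finset.Ioc 0 t, (Z u ω - P)) :=
    fun t => Finset.measurable_sum _ fun u _ => (hmeas u).sub measurable_const
  -- strong law for shifted sequence
  have hY : ∀ᵐ ω ∂μ, Tendsto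
      (fun n : ℕ => (∑ i ∈ Finset.range n, Z (i+1) ω) / n) atTop (𝓝 lamE) := by
    have h := strong_law_ae_real (fun i => Z (i+1))
      (by simpa using hZint)
      (fun i j hij => hindep.indepFun (by omega))
      (fun i => hident (i+1) 1 (by omega) le_rfl)
    have : μ[fun ω => Z 1 ω] = lamE := hlamE.symm
    simpa [this] using h
  -- rewrite sums
  have hsum_eq : ∀ (g : ℕ → ℝ) (t : ℕ),
      ∑ u ∈ Finset.Ioc 0 t, g u = ∑ i ∈ Finset.range t, g (1+i) := by
    intro g t
    rw [← Finset.Icc_add_one_left_eq_Ioc, ← Finset.Ico_add_one_right_eq_Icc, Finset.sum_Ico_eq_sum_range]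
    simp
  have hae : ∀ᵐ ω ∂μ, ∀ᶠ t : ℕ in atTop,
      ¬ (∑ u ∈ Finset.Ioc 0 t, (Z u ω - P) < x) := by
    filter_upwards [hY] with ω hω
    have hW : Tendsto (fun t : ℕ => ∑ u ∈ Finset.Ioc 0 t, (Z u ω - P)) atTop atTop := by
      have hdiv : Tendsto (fun t : ℕ =>
          (∑ u ∈ Finset.Ioc 0 t, (Z u ω - P)) / t) atTop (𝓝 (lamE - P)) := by
        have : ∀ t : ℕ, (∑ u ∈ Finset.Ioc 0 t, (Z u ω - P)) / t
            = (∑ i ∈ Finset.range t, Z (i+1) ω) / t - (t : ℝ) * P / t := by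
          intro t
          rw [hsum_eq (fun u => Z u ω - P) t, Finset.sum_sub_distrib, Finset.sum_const,
            Finset.card_range, sub_div, nsmul_eq_mul]
          congr 2
          exact Finset.sum_congr rfl fun i _ => by rw [add_comm]
        simp only [this]
        have h2 : Tendsto (fun t : ℕ => (t : ℝ) * P / t) atTop (𝓝 P) := by
          have he : (fun t : ℕ => (t : ℝ) * P / t) =ᶠ[atTop] (fun _ => P) := by
            filter_upwards [eventually_ne_atTop 0] with t ht
            field_simp
          exact Tendsto.congr' he.symm tendsto_const_nhds
        exact hω.sub h2
      have hmul := Tendsto.atTop_mul_pos (by linarith : (0:ℝ) < lamE - P)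
        tendsto_natCast_atTop_atTop hdiv
      refine hmul.congr' ?_
      filter_upwards [eventually_ne_atTop 0] with t ht
      field_simp
    filter_upwards [hW.eventually_ge_atTop x] with t h2
    exact not_lt.mpr h2
  -- dominated convergence on indicators
  have hDCT := tendsto_integral_of_dominated_convergence (F := fun t : ℕ =>
      Set.indicator {ω | ∑ u ∈ Finset.Ioc 0 t, (Z u ω - P) < x} (fun _ => (1:ℝ)))
    (f := fun _ => (0:ℝ)) (bound := fun _ => (1:ℝ))
    (fun t => ((measurable_const (a := (1:ℝ))).indicator
      (measurableSet_lt (hmeasW t) measurable_const)).aestronglyMeasurable)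
    (integrable_const 1)
    (fun t => Filter.Eventually.of_forall fun ω =>
      (norm_indicator_le_norm_self _ _).trans (by simp))
    (by
      filter_upwards [hae] with ω hω
      refine Tendsto.congr' ?_ tendsto_const_nhds
      filter_upwards [hω] with t ht
      exact (Set.indicator_of_notMem
        (show ω ∉ {ω' | ∑ u ∈ Finset.Ioc 0 t, (Z u ω' - P) < x} from ht)
        (fun _ => (1:ℝ))).symm)
  have heq : ∀ t : ℕ, ∫ ω, Set.indicator
      {ω | ∑ u ∈ Finset.Ioc 0 t, (Z u ω - P) < x} (fun _ => (1:ℝ)) ω ∂μ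
      = (μ {ω | ∑ u ∈ Finset.Ioc 0 t, (Z u ω - P) < x}).toReal := by
    intro t
    rw [integral_indicator (measurableSet_lt (hmeasW t) measurable_const)]
    rw [setIntegral_const, smul_eq_mul, mul_one, Measure.real_def]
  simp only [integral_zero] at hDCT
  exact Tendsto.congr (fun t => heq t) hDCT
end Helpers



/-- Tail probability of the finite-capacity battery level for `λe > P`: if
`r* < 0` is a negative root of the cumulant generating function of `Z 1 - P`,
then for every `x ∈ [0, B]`,
`limsup_{n→∞} (1/n) ∑_{t=1}^n Pr(S t < x) ≤ exp(r*(B - x))`. -/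
theorem battery_lower_tail_bound_finite_capacity
    {Ω : Type*} [MeasurableSpace Ω] (μ : Measure Ω) [IsProbabilityMeasure μ]
    (Z : ℕ → Ω → ℝ)
    (hmeas : ∀ t, Measurable (Z t))
    (hindep : iIndepFun Z μ)
    (hident : ∀ i j, 1 ≤ i → 1 ≤ j → IdentDistrib (Z i) (Z j) μ μ)
    (hnonneg : ∀ t ω, 0 ≤ Z t ω)
    (hZint : Integrable (Z 1) μ)
    (lamE P B : ℝ) (hlamE : lamE = ∫ ω, Z 1 ω ∂μ) (hP : 0 < P) (hB : 0 < B)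
    (hgt : P < lamE)
    (S : ℕ → Ω → ℝ)
    (hS0 : ∀ ω, S 0 ω = 0)
    (hS : ∀ t ω, S (t + 1) ω =
      min (S t ω + Z (t + 1) ω - (if P ≤ S t ω then P else 0)) B)
    (rstar : ℝ) (hrstar : rstar < 0)
    (hint : Integrable (fun ω => Real.exp (rstar * (Z 1 ω - P))) μ)
    (hroot : ∫ ω, Real.exp (rstar * (Z 1 ω - P)) ∂μ = 1) :
    ∀ x ∈ Set.Icc (0 : ℝ) B,
      Filter.limsup
        (fun n : ℕ => (1 / (n : ℝ)) * ∑ t ∈ Finset.Icc 1 n, (μ {ω | S t ω < x}).toReal)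
        Filter.atTop ≤ Real.exp (rstar * (B - x)) := by
  intro x hx
  obtain ⟨hx0, hxB⟩ := hx
  set K := Real.exp (rstar * (B - x)) with hK
  set ε : ℕ → ℝ := fun t => (μ {ω | ∑ u ∈ Finset.Ioc 0 t, (Z u ω - P) < x}).toReal with hε
  set a : ℕ → ℝ := fun n =>
    (1 / (n : ℝ)) * ∑ t ∈ Finset.Icc 1 n, (μ {ω | S t ω < x}).toReal with ha
  set c : ℕ → ℝ := fun n => (1 / (n : ℝ)) * ∑ t ∈ Finset.Icc 1 n, ε t with hc
  -- per-t bound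
  have hbound : ∀ t : ℕ, 1 ≤ t → (μ {ω | S t ω < x}).toReal ≤ K + ε t := by
    intro t ht
    set U : Set Ω := ⋃ s ∈ Finset.Ioc 0 (t-1),
      {ω | ∑ u ∈ Finset.Ioc s t, (Z u ω - P) < x - B} with hU
    set V : Set Ω := {ω | ∑ u ∈ Finset.Ioc 0 t, (Z u ω - P) < x} with hV
    have hsub : {ω | S t ω < x} ⊆ U ∪ V := by
      intro ω hω
      rcases pathwise (Z := Z) hP hB hS0 hS hxB ht hω with ⟨s, hs, hws⟩ | hw
      · exact Or.inl (Set.mem_biUnion hs hws)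
      · exact Or.inr hw
    have h1 : μ {ω | S t ω < x} ≤ μ U + μ V :=
      le_trans (measure_mono hsub) (measure_union_le _ _)
    have h2 : (μ {ω | S t ω < x}).toReal ≤ (μ U).toReal + (μ V).toReal := by
      have h3 := ENNReal.toReal_mono
        (ENNReal.add_ne_top.mpr ⟨measure_ne_top μ U, measure_ne_top μ V⟩) h1
      rwa [ENNReal.toReal_add (measure_ne_top μ U) (measure_ne_top μ V)] at h3
    have h4 : (μ U).toReal ≤ K := by
      have h5 := ville hmeas hindep hnonneg hrstar hident hroot t (x - B)
      have h6 : Real.exp (-(rstar * (x - B))) = K := by rw [hK]; congr 1; ring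
      rw [← h6]; exact h5
    have h7 : (μ V).toReal = ε t := rfl
    linarith
  -- Cesàro
  have htail := tendsto_tail hmeas hindep hident hZint hlamE hgt x
  have hshift : Tendsto (fun i : ℕ => ε (1 + i)) atTop (𝓝 0) := by
    have := htail.comp (tendsto_add_atTop_nat 1)
    refine this.congr fun i => ?_
    simp [hε, add_comm]
  have hreindex : ∀ (g : ℕ → ℝ) (n : ℕ),
      ∑ t ∈ Finset.Icc 1 n, g t = ∑ i ∈ Finset.range n, g (1 + i) := by
    intro g n
    rw [← Finset.Ico_add_one_right_eq_Icc, Finset.sum_Ico_eq_sum_range]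
    simp
  have hctends : Tendsto c atTop (𝓝 0) := by
    have h8 := hshift.cesaro
    refine h8.congr fun n => ?_
    rw [hc]
    simp only [smul_eq_mul, one_div]
    rw [hreindex ε n]
  -- eventual bound
  have hev : ∀ᶠ n in atTop, a n ≤ K + c n := by
    filter_upwards [eventually_ge_atTop 1] with n hn
    have hn0 : (n : ℝ) ≠ 0 := by positivity
    have hcard : (Finset.Icc 1 n).card = n := by
      rw [Nat.card_Icc]; omega
    have hsumle : ∑ t ∈ Finset.Icc 1 n, (μ {ω | S t ω < x}).toReal
        ≤ ∑ t ∈ Finset.Icc 1 n, (K + ε t) :=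
      Finset.sum_le_sum fun t ht => hbound t (Finset.mem_Icc.mp ht).1
    have : a n ≤ (1 / (n:ℝ)) * ∑ t ∈ Finset.Icc 1 n, (K + ε t) := by
      rw [ha]
      exact mul_le_mul_of_nonneg_left hsumle (by positivity)
    calc a n ≤ (1 / (n:ℝ)) * ∑ t ∈ Finset.Icc 1 n, (K + ε t) := this
      _ = (1 / (n:ℝ)) * ((n : ℝ) * K) + c n := by
          rw [Finset.sum_add_distrib, Finset.sum_const, hcard, nsmul_eq_mul, mul_add, hc]
      _ = K + c n := by field_simp
  have hKc : Tendsto (fun n => K + c n) atTop (𝓝 K) := by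
    simpa using tendsto_const_nhds.add hctends
  have h9 : limsup a atTop ≤ limsup (fun n => K + c n) atTop := by
    refine limsup_le_limsup hev ?_ ?_
    · refine isCoboundedUnder_le_of_eventually_le atTop (x := 0) ?_
      filter_upwards with n
      rw [ha]
      positivity
    · exact hKc.isBoundedUnder_le
  rwa [hKc.limsup_eq] at h9
end

section
/- Assume λ_e < P, B > 0, and that there exists r* > 0 with E[exp(r*·(Z_1 − P))] = 1. Then (λ_e/P)·[1 − (4/(λ_e·r*))·exp(−(r*/2)·(B − 2P))] ≤ liminf_{n→∞} (1/n)·Σ_{t=1}^n Pr(S_t ≥ P), and limsup_{n→∞} (1/n)·Σ_{t=1}^n Pr(S_t ≥ P) ≤ λ_e/P. -/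
open MeasureTheory ProbabilityTheory Filter Finset
namespace TPaux

noncomputable def vfun (P : ℝ) : ℕ → (ℕ → ℝ) → ℝ
  | 0 => fun _ => 0
  | (t+1) => fun z => max 0 (vfun P t z + (z (t+1) - P))

lemma vfun_nonneg (P : ℝ) (t : ℕ) (z : ℕ → ℝ) : 0 ≤ vfun P t z := by
  cases t with
  | zero => simp [vfun]
  | succ t => simp [vfun]

lemma vfun_measurable (P : ℝ) (t : ℕ) : Measurable (vfun P t) := by
  induction t with
  | zero => exact measurable_const
  | succ t ih =>
    show Measurable fun z : ℕ → ℝ => max 0 (vfun P t z + (z (t+1) - P))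
    exact measurable_const.max (ih.add ((measurable_pi_apply (t+1)).sub measurable_const))

lemma vfun_congr (P : ℝ) (t : ℕ) {z z' : ℕ → ℝ} (h : ∀ i, 1 ≤ i → i ≤ t → z i = z' i) :
    vfun P t z = vfun P t z' := by
  induction t with
  | zero => rfl
  | succ t ih =>
    show max 0 (vfun P t z + (z (t+1) - P)) = max 0 (vfun P t z' + (z' (t+1) - P))
    rw [ih (fun i h1 h2 => h i h1 (h2.trans (Nat.le_succ t))),
      h (t+1) (Nat.succ_le_succ (Nat.zero_le t)) le_rfl]

lemma indep_vfun {Ω : Type*} [MeasurableSpace Ω] {μ : Measure Ω} [IsProbabilityMeasure μ]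
    (Z : ℕ → Ω → ℝ) (hmeas : ∀ t, Measurable (Z t))
    (hindep : iIndepFun Z μ) (P : ℝ) (t : ℕ) :
    IndepFun (fun ω => vfun P t (fun i => Z i ω)) (Z (t+1)) μ := by
  classical
  have hd : Disjoint (Finset.range (t+1)) ({t+1} : Finset ℕ) := by simp
  have H := hindep.indepFun_finset (Finset.range (t+1)) {t+1} hd hmeas
  set φ : ((i : (Finset.range (t+1) : Finset ℕ)) → ℝ) → ℝ :=
    fun y => vfun P t (fun i => if h : i ∈ Finset.range (t+1) then y ⟨i, h⟩ else 0) with hφ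
  have hφm : Measurable φ := by
    apply (vfun_measurable P t).comp
    apply measurable_pi_lambda
    intro i
    by_cases h : i ∈ Finset.range (t+1)
    · simpa [h] using measurable_pi_apply (⟨i, h⟩ : (Finset.range (t+1) : Finset ℕ))
    · simp [h]
  have hψm : Measurable (fun y : ((i : ({t+1} : Finset ℕ)) → ℝ) =>
      y ⟨t+1, Finset.mem_singleton_self _⟩) := measurable_pi_apply _
  have H2 := H.comp hφm hψm
  have h1 : (fun ω => vfun P t (fun i => Z i ω)) = φ ∘ (fun a (i : (Finset.range (t+1) : Finset ℕ)) => Z i a) := by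
    funext ω
    refine vfun_congr P t fun i hi1 hi2 => ?_
    have h : i ∈ Finset.range (t+1) := Finset.mem_range.mpr (Nat.lt_succ_of_le hi2)
    simp [Function.comp, hφ, h]
  have h2 : Z (t+1) = (fun y : ((i : ({t+1} : Finset ℕ)) → ℝ) =>
      y ⟨t+1, Finset.mem_singleton_self _⟩) ∘ (fun a (i : ({t+1} : Finset ℕ)) => Z i a) := rfl
  rw [h1, h2]
  exact H2

lemma max_exp_bound {r : ℝ} (hr : 0 < r) (y : ℝ) : max y 0 ≤ (1/r) * Real.exp (r*y) := by
  rcases le_total y 0 with h | h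
  · rw [max_eq_right h]
    positivity
  · rw [max_eq_left h]
    have h1 : r*y ≤ Real.exp (r*y) := by nlinarith [Real.add_one_le_exp (r*y)]
    calc y = (r*y)/r := by field_simp
    _ ≤ Real.exp (r*y)/r := by gcongr
    _ = (1/r) * Real.exp (r*y) := by ring

lemma main_bound {Ω : Type*} [MeasurableSpace Ω] {μ : Measure Ω} [IsProbabilityMeasure μ]
    (Z : ℕ → Ω → ℝ) (hmeas : ∀ t, Measurable (Z t))
    (hindep : iIndepFun Z μ)
    (P r : ℝ) (hr : 0 < r)
    (hExpInt : ∀ t, 1 ≤ t → Integrable (fun ω => Real.exp (r * (Z t ω - P))) μ)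
    (hExpRoot : ∀ t, 1 ≤ t → ∫ ω, Real.exp (r * (Z t ω - P)) ∂μ = 1)
    (t : ℕ) :
    Integrable (fun ω => Real.exp (r * vfun P t (fun i => Z i ω))) μ ∧
    ∀ a : ℝ, ∫ ω, max (vfun P t (fun i => Z i ω) - a) 0 ∂μ ≤ (1/r) * Real.exp (-(r*a)) := by
  induction t with
  | zero =>
    constructor
    · simpa [vfun] using (integrable_const (1:ℝ))
    · intro a
      have : ∫ ω, max (vfun P 0 (fun i => Z i ω) - a) 0 ∂μ = max (-a) 0 := by
        simp [vfun]
      rw [this]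
      have := max_exp_bound hr (-a)
      simpa [mul_comm] using this
  | succ t ih =>
    obtain ⟨ihInt, ihBound⟩ := ih
    set Vt : Ω → ℝ := fun ω => vfun P t (fun i => Z i ω) with hVt
    have hVtm : Measurable Vt := (vfun_measurable P t).comp (measurable_pi_lambda _ hmeas)
    have hVsucc : ∀ ω, vfun P (t+1) (fun i => Z i ω) = max 0 (Vt ω + (Z (t+1) ω - P)) :=
      fun ω => rfl
    have hindepVZ : IndepFun Vt (Z (t+1)) μ := indep_vfun Z hmeas hindep P t
    have hexpm : Measurable (fun x : ℝ => Real.exp (r * (x - P))) := by fun_prop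
    have hexpm2 : Measurable (fun x : ℝ => Real.exp (r * x)) := by fun_prop
    have hZm := hmeas (t+1)
    have hEint : Integrable (fun ω => Real.exp (r * (Z (t+1) ω - P))) μ :=
      hExpInt (t+1) (Nat.le_add_left 1 t)
    have hERoot : ∫ ω, Real.exp (r * (Z (t+1) ω - P)) ∂μ = 1 :=
      hExpRoot (t+1) (Nat.le_add_left 1 t)
    have hprodind : IndepFun (fun ω => Real.exp (r * Vt ω))
        (fun ω => Real.exp (r * (Z (t+1) ω - P))) μ := hindepVZ.comp hexpm2 hexpm
    have hmulint : Integrable ((fun ω => Real.exp (r * Vt ω)) *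
        (fun ω => Real.exp (r * (Z (t+1) ω - P)))) μ := hprodind.integrable_mul ihInt hEint
    have hVm1 : Measurable (fun ω => vfun P (t+1) (fun i => Z i ω)) :=
      (vfun_measurable P (t+1)).comp (measurable_pi_lambda _ hmeas)
    have hIntSucc : Integrable (fun ω => Real.exp (r * vfun P (t+1) (fun i => Z i ω))) μ := by
      refine Integrable.mono' ((integrable_const (1:ℝ)).add hmulint)
        (Real.measurable_exp.comp (hVm1.const_mul r)).aestronglyMeasurable
        (Filter.Eventually.of_forall fun ω => ?_)
      rw [Real.norm_eq_abs, abs_of_pos (Real.exp_pos _), hVsucc ω]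
      rcases le_total (Vt ω + (Z (t+1) ω - P)) 0 with h|h
      · rw [max_eq_left h]
        have h1 : (0:ℝ) < Real.exp (r * Vt ω) * Real.exp (r * (Z (t+1) ω - P)) := by positivity
        simp only [mul_zero, Real.exp_zero, Pi.add_apply, Pi.mul_apply]
        linarith
      · rw [max_eq_right h, show r * (Vt ω + (Z (t+1) ω - P)) =
          r * Vt ω + r * (Z (t+1) ω - P) by ring, Real.exp_add]
        simp only [Pi.add_apply, Pi.mul_apply]
        linarith
    set ν1 : Measure ℝ := μ.map Vt with hν1
    set ν2 : Measure ℝ := μ.map (Z (t+1)) with hν2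
    haveI i1 : IsProbabilityMeasure ν1 := Measure.isProbabilityMeasure_map hVtm.aemeasurable
    haveI i2 : IsProbabilityMeasure ν2 := Measure.isProbabilityMeasure_map hZm.aemeasurable
    have hmap : μ.map (fun ω => (Vt ω, Z (t+1) ω)) = ν1.prod ν2 :=
      (indepFun_iff_map_prod_eq_prod_map_map hVtm.aemeasurable hZm.aemeasurable).mp hindepVZ
    have hexpν1 : Integrable (fun v => Real.exp (r * v)) ν1 :=
      (integrable_map_measure hexpm2.aestronglyMeasurable hVtm.aemeasurable).mpr ihInt
    have hexpν2 : Integrable (fun x => Real.exp (r * (x - P))) ν2 :=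
      (integrable_map_measure hexpm.aestronglyMeasurable hZm.aemeasurable).mpr hEint
    have hEν2 : ∫ x, Real.exp (r * (x - P)) ∂ν2 = 1 := by
      rw [hν2, integral_map hZm.aemeasurable hexpm.aestronglyMeasurable]; exact hERoot
    have keyge : ∀ a : ℝ, 0 ≤ a →
        ∫ ω, max (vfun P (t+1) (fun i => Z i ω) - a) 0 ∂μ ≤ (1/r) * Real.exp (-(r*a)) := by
      intro a ha
      have hpt : ∀ ω, max (vfun P (t+1) (fun i => Z i ω) - a) 0 =
          max (Vt ω + (Z (t+1) ω - P) - a) 0 := by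
        intro ω; rw [hVsucc ω]
        rcases le_total (Vt ω + (Z (t+1) ω - P)) 0 with h|h
        · rw [max_eq_left h, max_eq_right (by linarith), max_eq_right (by linarith)]
        · rw [max_eq_right h]
      have hGcont : Continuous (fun p : ℝ × ℝ => max (p.1 + (p.2 - P) - a) 0) :=
        Continuous.max (by fun_prop) continuous_const
      have hpairm : AEMeasurable (fun ω => (Vt ω, Z (t+1) ω)) μ :=
        (hVtm.prodMk hZm).aemeasurable
      have step1 : ∫ ω, max (Vt ω + (Z (t+1) ω - P) - a) 0 ∂μ =
          ∫ p : ℝ × ℝ, max (p.1 + (p.2 - P) - a) 0 ∂(ν1.prod ν2) := by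
        rw [← hmap, integral_map hpairm hGcont.aestronglyMeasurable]
      have hFint : Integrable (fun p : ℝ × ℝ =>
          Real.exp (r * p.1) * Real.exp (r * (p.2 - P))) (ν1.prod ν2) :=
        hexpν1.mul_prod hexpν2
      have hGle : ∀ p : ℝ × ℝ, max (p.1 + (p.2 - P) - a) 0 ≤
          ((1/r) * Real.exp (-(r*a))) * (Real.exp (r * p.1) * Real.exp (r * (p.2 - P))) := by
        intro p
        calc max (p.1 + (p.2 - P) - a) 0 ≤ (1/r) * Real.exp (r * (p.1 + (p.2 - P) - a)) :=
          max_exp_bound hr _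
        _ = ((1/r) * Real.exp (-(r*a))) * (Real.exp (r * p.1) * Real.exp (r * (p.2 - P))) := by
            rw [show r * (p.1 + (p.2 - P) - a) = -(r*a) + (r * p.1 + r * (p.2 - P)) by ring,
              Real.exp_add, Real.exp_add]; ring
      have hGint : Integrable (fun p : ℝ × ℝ => max (p.1 + (p.2 - P) - a) 0) (ν1.prod ν2) := by
        refine Integrable.mono' (hFint.const_mul ((1/r) * Real.exp (-(r*a))))
          hGcont.aestronglyMeasurable (Filter.Eventually.of_forall fun p => ?_)
        rw [Real.norm_eq_abs, abs_of_nonneg (le_max_right _ 0)]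
        exact hGle p
      have step2 : ∫ p : ℝ × ℝ, max (p.1 + (p.2 - P) - a) 0 ∂(ν1.prod ν2) =
          ∫ x, ∫ v, max (v + (x - P) - a) 0 ∂ν1 ∂ν2 := integral_prod_symm _ hGint
      have inner_le : ∀ x : ℝ, ∫ v, max (v + (x - P) - a) 0 ∂ν1 ≤
          ((1/r) * Real.exp (-(r*a))) * Real.exp (r * (x - P)) := by
        intro x
        have hcont2 : Continuous (fun v : ℝ => max (v + (x - P) - a) 0) :=
          Continuous.max (by fun_prop) continuous_const
        have e1 : ∫ v, max (v + (x - P) - a) 0 ∂ν1 =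
            ∫ ω, max (Vt ω - (a - (x - P))) 0 ∂μ := by
          rw [hν1, integral_map hVtm.aemeasurable hcont2.aestronglyMeasurable]
          refine integral_congr_ae (Filter.Eventually.of_forall fun ω => ?_)
          congr 1; ring
        rw [e1]
        calc ∫ ω, max (Vt ω - (a - (x - P))) 0 ∂μ ≤
            (1/r) * Real.exp (-(r*(a - (x - P)))) := ihBound _
        _ = ((1/r) * Real.exp (-(r*a))) * Real.exp (r * (x - P)) := by
            rw [show -(r*(a - (x - P))) = -(r*a) + r*(x-P) by ring, Real.exp_add]; ring
      have step3 : ∫ x, ∫ v, max (v + (x - P) - a) 0 ∂ν1 ∂ν2 ≤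
          ∫ x, ((1/r) * Real.exp (-(r*a))) * Real.exp (r * (x - P)) ∂ν2 := by
        refine integral_mono_of_nonneg ?_ (hexpν2.const_mul _)
          (Filter.Eventually.of_forall inner_le)
        exact Filter.Eventually.of_forall fun x => integral_nonneg fun v => le_max_right _ 0
      have step4 : ∫ x, ((1/r) * Real.exp (-(r*a))) * Real.exp (r * (x - P)) ∂ν2 =
          (1/r) * Real.exp (-(r*a)) := by
        rw [integral_const_mul, hEν2, mul_one]
      calc ∫ ω, max (vfun P (t+1) (fun i => Z i ω) - a) 0 ∂μ
          = ∫ ω, max (Vt ω + (Z (t+1) ω - P) - a) 0 ∂μ :=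
            integral_congr_ae (Filter.Eventually.of_forall hpt)
      _ = ∫ p : ℝ × ℝ, max (p.1 + (p.2 - P) - a) 0 ∂(ν1.prod ν2) := step1
      _ = ∫ x, ∫ v, max (v + (x - P) - a) 0 ∂ν1 ∂ν2 := step2
      _ ≤ ∫ x, ((1/r) * Real.exp (-(r*a))) * Real.exp (r * (x - P)) ∂ν2 := step3
      _ = (1/r) * Real.exp (-(r*a)) := step4
    refine ⟨hIntSucc, fun a => ?_⟩
    rcases le_or_gt 0 a with ha | ha
    · exact keyge a ha
    · have hVint : Integrable (fun ω => vfun P (t+1) (fun i => Z i ω)) μ := by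
        refine Integrable.mono' (hIntSucc.const_mul (1/r)) hVm1.aestronglyMeasurable
          (Filter.Eventually.of_forall fun ω => ?_)
        rw [Real.norm_eq_abs, abs_of_nonneg (vfun_nonneg P (t+1) _)]
        have h := max_exp_bound hr (vfun P (t+1) (fun i => Z i ω))
        rwa [max_eq_left (vfun_nonneg _ _ _)] at h
      have hEV : ∫ ω, vfun P (t+1) (fun i => Z i ω) ∂μ ≤ 1/r := by
        have h := keyge 0 le_rfl
        rw [show (fun ω => max (vfun P (t+1) (fun i => Z i ω) - 0) 0) =
            fun ω => vfun P (t+1) (fun i => Z i ω) from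
          funext fun ω => by rw [sub_zero, max_eq_left (vfun_nonneg _ _ _)]] at h
        simpa using h
      have heq : ∫ ω, max (vfun P (t+1) (fun i => Z i ω) - a) 0 ∂μ =
          (∫ ω, vfun P (t+1) (fun i => Z i ω) ∂μ) - a := by
        rw [show (fun ω => max (vfun P (t+1) (fun i => Z i ω) - a) 0) =
            fun ω => vfun P (t+1) (fun i => Z i ω) - a from
          funext fun ω => max_eq_left (by
            have := vfun_nonneg P (t+1) (fun i => Z i ω); linarith)]
        rw [integral_sub hVint (integrable_const a), integral_const]
        simp
      rw [heq]
      have hexp : 1 - r * a ≤ Real.exp (-(r*a)) := by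
        have := Real.add_one_le_exp (-(r*a)); linarith
      have h1r : (0:ℝ) < 1/r := by positivity
      have key := mul_le_mul_of_nonneg_left hexp (le_of_lt h1r)
      have expand : (1/r)*(1-r*a) = 1/r - a := by field_simp
      linarith

end TPaux

open TPaux in
/-- Bounds on the transmission probability with finite battery capacity, case
`λe < P`: with `r* > 0` a positive root of the cumulant generating function of
`Z 1 - P`, the long-run average of `Pr(S t ≥ P)` satisfies
`(λe/P)·[1 - (4/(λe r*)) exp(-(r*/2)(B - 2P))] ≤ liminf ≤ limsup ≤ λe/P`. -/
theorem transmission_probability_finite_battery_low_rate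
    {Ω : Type*} [MeasurableSpace Ω] (μ : Measure Ω) [IsProbabilityMeasure μ]
    (Z : ℕ → Ω → ℝ)
    (hmeas : ∀ t, Measurable (Z t))
    (hindep : iIndepFun Z μ)
    (hident : ∀ i j, 1 ≤ i → 1 ≤ j → IdentDistrib (Z i) (Z j) μ μ)
    (hnonneg : ∀ t ω, 0 ≤ Z t ω)
    (hZint : Integrable (Z 1) μ)
    (lamE P B : ℝ) (hlamE : lamE = ∫ ω, Z 1 ω ∂μ) (hP : 0 < P) (hB : 0 < B)
    (hlt : lamE < P)
    (S : ℕ → Ω → ℝ)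
    (hS0 : ∀ ω, S 0 ω = 0)
    (hS : ∀ t ω, S (t + 1) ω =
      min (S t ω + Z (t + 1) ω - (if P ≤ S t ω then P else 0)) B)
    (rstar : ℝ) (hrstar : 0 < rstar)
    (hint : Integrable (fun ω => Real.exp (rstar * (Z 1 ω - P))) μ)
    (hroot : ∫ ω, Real.exp (rstar * (Z 1 ω - P)) ∂μ = 1) :
    (lamE / P) * (1 - (4 / (lamE * rstar)) * Real.exp (-(rstar / 2) * (B - 2 * P)))
      ≤ Filter.liminf
          (fun n : ℕ => (1 / (n : ℝ)) * ∑ t ∈ Finset.Icc 1 n, (μ {ω | P ≤ S t ω}).toReal)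
          Filter.atTop ∧
    Filter.limsup
      (fun n : ℕ => (1 / (n : ℝ)) * ∑ t ∈ Finset.Icc 1 n, (μ {ω | P ≤ S t ω}).toReal)
      Filter.atTop ≤ lamE / P := by
  classical
  have hPne : P ≠ 0 := ne_of_gt hP
  have hrne : rstar ≠ 0 := ne_of_gt hrstar
  have hlamnn : 0 ≤ lamE := hlamE ▸ integral_nonneg (fun ω => hnonneg 1 ω)
  -- identically distributed consequences
  have hexpu : Measurable (fun x : ℝ => Real.exp (rstar * (x - P))) := by fun_prop
  have hid : ∀ t, 1 ≤ t → IdentDistrib (Z t) (Z 1) μ μ := fun t ht => hident t 1 ht le_rfl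
  have hZint' : ∀ t, 1 ≤ t → Integrable (Z t) μ := fun t ht => (hid t ht).integrable_iff.mpr hZint
  have hEZ : ∀ t, 1 ≤ t → ∫ ω, Z t ω ∂μ = lamE := fun t ht =>
    ((hid t ht).integral_eq).trans hlamE.symm
  have hidexp : ∀ t, 1 ≤ t → IdentDistrib (fun ω => Real.exp (rstar * (Z t ω - P)))
      (fun ω => Real.exp (rstar * (Z 1 ω - P))) μ μ := fun t ht => (hid t ht).comp hexpu
  have hExpInt : ∀ t, 1 ≤ t → Integrable (fun ω => Real.exp (rstar * (Z t ω - P))) μ :=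
    fun t ht => (hidexp t ht).integrable_iff.mpr hint
  have hExpRoot : ∀ t, 1 ≤ t → ∫ ω, Real.exp (rstar * (Z t ω - P)) ∂μ = 1 :=
    fun t ht => ((hidexp t ht).integral_eq).trans hroot
  -- basic properties of S
  have hSmeas : ∀ t, Measurable (S t) := by
    intro t; induction t with
    | zero =>
      rw [show S 0 = fun _ => (0:ℝ) from funext hS0]; exact measurable_const
    | succ t ih =>
      rw [show S (t+1) = fun ω => min (S t ω + Z (t+1) ω - (if P ≤ S t ω then P else 0)) B
        from funext (hS t)]
      exact ((ih.add (hmeas (t+1))).sub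
        (Measurable.ite (measurableSet_le measurable_const ih)
          measurable_const measurable_const)).min measurable_const
  have hSnn : ∀ t ω, 0 ≤ S t ω := by
    intro t; induction t with
    | zero => intro ω; rw [hS0]
    | succ t ih =>
      intro ω; rw [hS t ω]
      refine le_min ?_ hB.le
      split_ifs with h
      · linarith [hnonneg (t+1) ω]
      · linarith [ih ω, hnonneg (t+1) ω]
  have hSleB : ∀ t ω, S t ω ≤ B := by
    intro t ω; cases t with
    | zero => rw [hS0]; exact hB.le
    | succ t => rw [hS t ω]; exact min_le_right _ _
  have hSint : ∀ t, Integrable (S t) μ := fun t =>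
    Integrable.mono' (integrable_const B) (hSmeas t).aestronglyMeasurable
      (Filter.Eventually.of_forall fun ω => by
        rw [Real.norm_eq_abs, abs_of_nonneg (hSnn t ω)]; exact hSleB t ω)
  -- the dominating process V
  set V : ℕ → Ω → ℝ := fun t ω => TPaux.vfun P t (fun i => Z i ω) with hV
  have hVnn : ∀ t ω, 0 ≤ V t ω := fun t ω => TPaux.vfun_nonneg P t _
  have hVm : ∀ t, Measurable (V t) := fun t =>
    (TPaux.vfun_measurable P t).comp (measurable_pi_lambda _ hmeas)
  have hmain := TPaux.main_bound Z hmeas hindep P rstar hrstar hExpInt hExpRoot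
  have hVint : ∀ t, Integrable (V t) μ := by
    intro t
    refine Integrable.mono' ((hmain t).1.const_mul (1/rstar)) (hVm t).aestronglyMeasurable
      (Filter.Eventually.of_forall fun ω => ?_)
    rw [Real.norm_eq_abs, abs_of_nonneg (hVnn t ω)]
    have h := TPaux.max_exp_bound hrstar (V t ω)
    rwa [max_eq_left (hVnn t ω)] at h
  have hEVle : ∀ t, ∫ ω, V t ω ∂μ ≤ 1/rstar := by
    intro t
    have h := (hmain t).2 0
    rw [show (fun ω => max (TPaux.vfun P t (fun i => Z i ω) - 0) 0) = V t from
      funext fun ω => by rw [sub_zero, max_eq_left (hVnn t ω)]] at h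
    simpa using h
  -- comparison S ≤ V + 2P, via the drift inequality
  have hVsucc : ∀ t ω, V (t+1) ω = max 0 (V t ω + (Z (t+1) ω - P)) := fun t ω => rfl
  have hSV : ∀ t ω, S t ω - 2*P ≤ V t ω := by
    intro t; induction t with
    | zero => intro ω; rw [hS0]; have := hVnn 0 ω; linarith
    | succ t ih =>
      intro ω
      have hstep : S t ω + Z (t+1) ω - (if P ≤ S t ω then P else 0) - 2*P ≤
          V t ω + (Z (t+1) ω - P) := by
        split_ifs with h
        · linarith [ih ω]
        · push_neg at h; linarith [hVnn t ω]
      rw [hS t ω, hVsucc t ω]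
      have hmin := min_le_left (S t ω + Z (t+1) ω - (if P ≤ S t ω then P else 0)) B
      exact le_trans (by linarith) (le_max_right _ _)
  have hA : ∀ t ω, S t ω + Z (t+1) ω - (if P ≤ S t ω then P else 0) ≤
      V t ω + (Z (t+1) ω - P) + 2*P := by
    intro t ω
    split_ifs with h
    · linarith [hSV t ω]
    · push_neg at h; linarith [hVnn t ω]
  -- the waste process
  set W : ℕ → Ω → ℝ := fun t ω =>
    S t ω + Z (t+1) ω - (if P ≤ S t ω then P else 0) - S (t+1) ω with hW
  have hWnn : ∀ t ω, 0 ≤ W t ω := by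
    intro t ω
    have hmin := min_le_left (S t ω + Z (t+1) ω - (if P ≤ S t ω then P else 0)) B
    simp only [hW]
    rw [hS t ω]
    linarith
  have hWle : ∀ t ω, W t ω ≤ max (V (t+1) ω - (B - 2*P)) 0 := by
    intro t ω
    rcases le_total (S t ω + Z (t+1) ω - (if P ≤ S t ω then P else 0)) B with h | h
    · have heq : W t ω = S t ω + Z (t+1) ω - (if P ≤ S t ω then P else 0) -
          min (S t ω + Z (t+1) ω - (if P ≤ S t ω then P else 0)) B := by
        simp only [hW]; rw [hS t ω]
      rw [heq, min_eq_left h]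
      simp
    · have h1 : W t ω = S t ω + Z (t+1) ω - (if P ≤ S t ω then P else 0) - B := by
        simp only [hW]; rw [hS t ω, min_eq_right h]
      have h2 : V t ω + (Z (t+1) ω - P) ≤ V (t+1) ω := by
        rw [hVsucc t ω]; exact le_max_right _ _
      have h3 := hA t ω
      refine le_trans ?_ (le_max_left _ _)
      linarith
  have hiteint : ∀ t, Integrable (fun ω => if P ≤ S t ω then P else 0) μ := by
    intro t
    refine Integrable.mono' (integrable_const P)
      (Measurable.ite (measurableSet_le measurable_const (hSmeas t)) measurable_const
        measurable_const).aestronglyMeasurable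
      (Filter.Eventually.of_forall fun ω => ?_)
    rw [Real.norm_eq_abs]
    split_ifs
    · rw [abs_of_nonneg hP.le]
    · rw [abs_of_nonneg le_rfl]; exact hP.le
  have hWint : ∀ t, Integrable (W t) μ := fun t =>
    (((hSint t).add (hZint' (t+1) (Nat.le_add_left 1 t))).sub (hiteint t)).sub (hSint (t+1))
  -- expectation of the waste
  have hEW : ∀ t, ∫ ω, W t ω ∂μ ≤ (4/rstar) * Real.exp (-(rstar/2) * (B - 2*P)) := by
    intro t
    have hmaxint : Integrable (fun ω => max (V (t+1) ω - (B - 2*P)) 0) μ :=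
      ((hVint (t+1)).sub (integrable_const (B - 2*P))).pos_part
    have h1 : ∫ ω, W t ω ∂μ ≤ ∫ ω, max (V (t+1) ω - (B - 2*P)) 0 ∂μ :=
      integral_mono (hWint t) hmaxint (hWle t)
    have hexppos := Real.exp_pos (-(rstar/2) * (B - 2*P))
    have h1r : (0:ℝ) < 1/rstar := by positivity
    rcases le_total 0 (B - 2*P) with hb | hb
    · have h2 : ∫ ω, max (V (t+1) ω - (B - 2*P)) 0 ∂μ ≤
          (1/rstar) * Real.exp (-(rstar * (B - 2*P))) := (hmain (t+1)).2 (B - 2*P)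
      have e1 : Real.exp (-(rstar * (B - 2*P))) ≤ Real.exp (-(rstar/2) * (B - 2*P)) :=
        Real.exp_le_exp.mpr (by nlinarith)
      have e2 : (1/rstar) * Real.exp (-(rstar * (B - 2*P))) ≤
          (1/rstar) * Real.exp (-(rstar/2) * (B - 2*P)) :=
        mul_le_mul_of_nonneg_left e1 h1r.le
      have e3 : (1/rstar) * Real.exp (-(rstar/2) * (B - 2*P)) ≤
          (4/rstar) * Real.exp (-(rstar/2) * (B - 2*P)) := by
        have h14 : (1:ℝ)/rstar ≤ 4/rstar := by
          rw [div_le_div_iff₀ hrstar hrstar]; nlinarith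
        exact mul_le_mul_of_nonneg_right h14 hexppos.le
      linarith
    · have heq : ∫ ω, max (V (t+1) ω - (B - 2*P)) 0 ∂μ =
          (∫ ω, V (t+1) ω ∂μ) - (B - 2*P) := by
        rw [show (fun ω => max (V (t+1) ω - (B - 2*P)) 0) = fun ω => V (t+1) ω - (B - 2*P)
          from funext fun ω => max_eq_left (by linarith [hVnn (t+1) ω])]
        rw [integral_sub (hVint (t+1)) (integrable_const _), integral_const]
        simp
      have h2 := hEVle (t+1)
      have e1 : 1 - (rstar/2) * (B - 2*P) ≤ Real.exp (-(rstar/2) * (B - 2*P)) := by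
        have := Real.add_one_le_exp (-(rstar/2) * (B - 2*P)); linarith
      have e2 := mul_le_mul_of_nonneg_left e1 (show (0:ℝ) ≤ 4/rstar by positivity)
      have e3 : (4/rstar) * (1 - (rstar/2) * (B - 2*P)) = 4/rstar - 2*(B - 2*P) := by
        field_simp; ring
      have h14 : (1:ℝ)/rstar ≤ 4/rstar := by
        rw [div_le_div_iff₀ hrstar hrstar]; nlinarith
      rw [heq] at h1
      rw [e3] at e2
      linarith
  have hEWnn : ∀ t, 0 ≤ ∫ ω, W t ω ∂μ := fun t => integral_nonneg (hWnn t)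
  -- the indicator integral
  have hitevalue : ∀ t, ∫ ω, (if P ≤ S t ω then P else 0) ∂μ =
      P * (μ {ω | P ≤ S t ω}).toReal := by
    intro t
    have hset : MeasurableSet {ω | P ≤ S t ω} := measurableSet_le measurable_const (hSmeas t)
    rw [show (fun ω => if P ≤ S t ω then P else 0) =
        Set.indicator {ω | P ≤ S t ω} (fun _ => P) from
      funext fun ω => by rw [Set.indicator_apply]; simp [Set.mem_setOf_eq]]
    rw [integral_indicator_const P hset]
    simp [mul_comm, Measure.real_def]
  -- one-step expectation identity
  have hstepE : ∀ t, ∫ ω, S (t+1) ω ∂μ = (∫ ω, S t ω ∂μ) + lamE -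
      P * (μ {ω | P ≤ S t ω}).toReal - ∫ ω, W t ω ∂μ := by
    intro t
    have h1 : ∫ ω, S (t+1) ω ∂μ =
        ∫ ω, (S t ω + Z (t+1) ω - (if P ≤ S t ω then P else 0) - W t ω) ∂μ :=
      integral_congr_ae (Filter.Eventually.of_forall fun ω => by simp only [hW]; ring)
    have hint2 : Integrable (fun ω => S t ω + Z (t+1) ω) μ :=
      (hSint t).add (hZint' (t+1) (Nat.le_add_left 1 t))
    have hint3 : Integrable (fun ω => S t ω + Z (t+1) ω - (if P ≤ S t ω then P else 0)) μ :=
      hint2.sub (hiteint t)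
    have hWint' : Integrable (fun ω => W t ω) μ := hWint t
    rw [h1, integral_sub hint3 hWint', integral_sub hint2 (hiteint t),
      integral_add (hSint t) (hZint' (t+1) (Nat.le_add_left 1 t)),
      hEZ (t+1) (Nat.le_add_left 1 t), hitevalue t]
  have hES0 : ∫ ω, S 0 ω ∂μ = 0 := by
    rw [show (fun ω => S 0 ω) = fun _ => (0:ℝ) from funext hS0]
    simp
  -- telescoping
  have hsum : ∀ n : ℕ, P * ∑ t ∈ Finset.range n, (μ {ω | P ≤ S t ω}).toReal =
      n * lamE - (∫ ω, S n ω ∂μ) - ∑ t ∈ Finset.range n, ∫ ω, W t ω ∂μ := by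
    intro n; induction n with
    | zero => simp [hES0]
    | succ n ih =>
      rw [Finset.sum_range_succ, Finset.sum_range_succ, mul_add]
      have h := hstepE n
      push_cast
      linarith
  have hESnn : ∀ n, 0 ≤ ∫ ω, S n ω ∂μ := fun n => integral_nonneg (hSnn n)
  have hESleB : ∀ n, ∫ ω, S n ω ∂μ ≤ B := by
    intro n
    calc ∫ ω, S n ω ∂μ ≤ ∫ _, B ∂μ := integral_mono (hSint n) (integrable_const B) (hSleB n)
    _ = B := by simp
  have hupper : ∀ n : ℕ, P * ∑ t ∈ Finset.range n, (μ {ω | P ≤ S t ω}).toReal ≤ n * lamE := by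
    intro n
    rw [hsum n]
    have h1 := hESnn n
    have h2 : 0 ≤ ∑ t ∈ Finset.range n, ∫ ω, W t ω ∂μ := Finset.sum_nonneg fun t _ => hEWnn t
    linarith
  have hlower : ∀ n : ℕ, (n:ℝ) * lamE - B -
      n * ((4/rstar) * Real.exp (-(rstar/2) * (B - 2*P))) ≤
      P * ∑ t ∈ Finset.range n, (μ {ω | P ≤ S t ω}).toReal := by
    intro n
    rw [hsum n]
    have h1 := hESleB n
    have h2 : ∑ t ∈ Finset.range n, ∫ ω, W t ω ∂μ ≤
        n * ((4/rstar) * Real.exp (-(rstar/2) * (B - 2*P))) := by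
      calc ∑ t ∈ Finset.range n, ∫ ω, W t ω ∂μ ≤
          ∑ x ∈ Finset.range n, ((4/rstar) * Real.exp (-(rstar/2) * (B - 2*P))) :=
        Finset.sum_le_sum fun t _ => hEW t
      _ = n * ((4/rstar) * Real.exp (-(rstar/2) * (B - 2*P))) := by
        rw [Finset.sum_const, Finset.card_range, nsmul_eq_mul]
    linarith
  -- from range sums to Icc sums
  have hp0 : (μ {ω | P ≤ S 0 ω}).toReal = 0 := by
    have h : {ω | P ≤ S 0 ω} = ∅ := by
      ext ω; simp [hS0 ω, not_le.mpr hP]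
    simp [h]
  have hpnn : ∀ t, 0 ≤ (μ {ω | P ≤ S t ω}).toReal := fun t => ENNReal.toReal_nonneg
  have hple1 : ∀ t, (μ {ω | P ≤ S t ω}).toReal ≤ 1 := by
    intro t
    calc (μ {ω | P ≤ S t ω}).toReal ≤ (1:ENNReal).toReal :=
      ENNReal.toReal_mono ENNReal.one_ne_top prob_le_one
    _ = 1 := by simp
  have hIcc : ∀ n : ℕ, ∑ t ∈ Finset.Icc 1 n, (μ {ω | P ≤ S t ω}).toReal =
      ∑ t ∈ Finset.range n, (μ {ω | P ≤ S t ω}).toReal + (μ {ω | P ≤ S n ω}).toReal := by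
    intro n; induction n with
    | zero => simp [hp0]
    | succ n ih =>
      rw [Finset.sum_Icc_succ_top (Nat.le_add_left 1 n), ih, Finset.sum_range_succ]
  set wb : ℝ := (4/rstar) * Real.exp (-(rstar/2) * (B - 2*P)) with hwb
  set A : ℕ → ℝ :=
    fun n => (1 / (n : ℝ)) * ∑ t ∈ Finset.Icc 1 n, (μ {ω | P ≤ S t ω}).toReal with hA
  have hAnn : ∀ n, 0 ≤ A n := by
    intro n
    simp only [hA]
    have h := Finset.sum_nonneg (fun t (_ : t ∈ Finset.Icc 1 n) => hpnn t)
    positivity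
  have hAle1 : ∀ n, A n ≤ 1 := by
    intro n
    rcases Nat.eq_zero_or_pos n with h0 | h0
    · subst h0; simp [hA]
    · have hn : (0:ℝ) < n := by exact_mod_cast h0
      have hs : ∑ t ∈ Finset.Icc 1 n, (μ {ω | P ≤ S t ω}).toReal ≤ (n:ℝ) := by
        calc ∑ t ∈ Finset.Icc 1 n, (μ {ω | P ≤ S t ω}).toReal ≤
            ∑ t ∈ Finset.Icc 1 n, (1:ℝ) := Finset.sum_le_sum fun t _ => hple1 t
        _ = (n:ℝ) := by simp [Nat.card_Icc]
      have h2 : (1/(n:ℝ)) * (n:ℝ) = 1 := by field_simp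
      simp only [hA]
      have h3 := mul_le_mul_of_nonneg_left hs (show (0:ℝ) ≤ 1/(n:ℝ) by positivity)
      linarith
  have hup : ∀ n : ℕ, 1 ≤ n → A n ≤ lamE/P + 1/(n:ℝ) := by
    intro n hn
    have hn0 : (0:ℝ) < n := by exact_mod_cast hn
    have hn0' : (n:ℝ) ≠ 0 := ne_of_gt hn0
    have h1 : ∑ t ∈ Finset.range n, (μ {ω | P ≤ S t ω}).toReal ≤ (n:ℝ) * lamE / P := by
      rw [le_div_iff₀ hP]
      have := hupper n
      linarith
    have h2 : ∑ t ∈ Finset.Icc 1 n, (μ {ω | P ≤ S t ω}).toReal ≤ (n:ℝ) * lamE / P + 1 := by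
      rw [hIcc n]; linarith [hple1 n]
    simp only [hA]
    have h3 := mul_le_mul_of_nonneg_left h2 (show (0:ℝ) ≤ 1/(n:ℝ) by positivity)
    have h4 : (1/(n:ℝ)) * ((n:ℝ) * lamE / P + 1) = lamE/P + 1/(n:ℝ) := by
      field_simp
    linarith
  have hlo : ∀ n : ℕ, 1 ≤ n → lamE/P - wb/P - (B/P) * (1/(n:ℝ)) ≤ A n := by
    intro n hn
    have hn0 : (0:ℝ) < n := by exact_mod_cast hn
    have hn0' : (n:ℝ) ≠ 0 := ne_of_gt hn0
    have h1 : ((n:ℝ) * lamE - B - n * wb)/P ≤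
        ∑ t ∈ Finset.range n, (μ {ω | P ≤ S t ω}).toReal := by
      rw [div_le_iff₀ hP]
      have := hlower n
      linarith
    have h2 : ((n:ℝ) * lamE - B - n * wb)/P ≤
        ∑ t ∈ Finset.Icc 1 n, (μ {ω | P ≤ S t ω}).toReal := by
      rw [hIcc n]; linarith [hpnn n]
    simp only [hA]
    have h3 := mul_le_mul_of_nonneg_left h2 (show (0:ℝ) ≤ 1/(n:ℝ) by positivity)
    have h4 : (1/(n:ℝ)) * (((n:ℝ) * lamE - B - n * wb)/P) =
        lamE/P - wb/P - (B/P) * (1/(n:ℝ)) := by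
      field_simp
      ring
    linarith
  have htend1 : Tendsto (fun n : ℕ => lamE/P + 1/(n:ℝ)) atTop (nhds (lamE/P)) := by
    have h := tendsto_one_div_atTop_nhds_zero_nat (𝕜 := ℝ)
    simpa using tendsto_const_nhds.add h
  have hlimsup : Filter.limsup A Filter.atTop ≤ lamE / P := by
    have hco : IsCoboundedUnder (· ≤ ·) Filter.atTop A :=
      isCoboundedUnder_le_of_le Filter.atTop hAnn
    have hbd : IsBoundedUnder (· ≤ ·) Filter.atTop (fun n : ℕ => lamE/P + 1/(n:ℝ)) :=
      htend1.isBoundedUnder_le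
    have hev : ∀ᶠ n in Filter.atTop, A n ≤ lamE/P + 1/(n:ℝ) :=
      Filter.eventually_atTop.mpr ⟨1, hup⟩
    calc Filter.limsup A Filter.atTop ≤
        Filter.limsup (fun n : ℕ => lamE/P + 1/(n:ℝ)) Filter.atTop :=
      Filter.limsup_le_limsup hev hco hbd
    _ = lamE/P := htend1.limsup_eq
  have htend2 : Tendsto (fun n : ℕ => lamE/P - wb/P - (B/P)*(1/(n:ℝ))) atTop
      (nhds (lamE/P - wb/P)) := by
    have h := tendsto_one_div_atTop_nhds_zero_nat.const_mul (B/P)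
    simpa using tendsto_const_nhds.sub h
  have hliminf : lamE/P - wb/P ≤ Filter.liminf A Filter.atTop := by
    have hco : IsCoboundedUnder (· ≥ ·) Filter.atTop A :=
      isCoboundedUnder_ge_of_le Filter.atTop hAle1
    have hbd : IsBoundedUnder (· ≥ ·) Filter.atTop
        (fun n : ℕ => lamE/P - wb/P - (B/P)*(1/(n:ℝ))) := htend2.isBoundedUnder_ge
    have hev : ∀ᶠ n in Filter.atTop,
        (fun n : ℕ => lamE/P - wb/P - (B/P)*(1/(n:ℝ))) n ≤ A n :=
      Filter.eventually_atTop.mpr ⟨1, hlo⟩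
    calc lamE/P - wb/P =
        Filter.liminf (fun n : ℕ => lamE/P - wb/P - (B/P)*(1/(n:ℝ))) Filter.atTop :=
      htend2.liminf_eq.symm
    _ ≤ Filter.liminf A Filter.atTop := Filter.liminf_le_liminf hev hbd hco
  constructor
  · rcases eq_or_lt_of_le hlamnn with h0 | hpos
    · rw [← h0]
      simp only [zero_div, zero_mul]
      have hco : IsCoboundedUnder (· ≥ ·) Filter.atTop A :=
        isCoboundedUnder_ge_of_le Filter.atTop hAle1
      exact le_liminf_of_le hco (Filter.Eventually.of_forall hAnn)
    · have hlne : lamE ≠ 0 := ne_of_gt hpos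
      have heq : (lamE / P) *
          (1 - (4 / (lamE * rstar)) * Real.exp (-(rstar / 2) * (B - 2 * P))) =
          lamE/P - wb/P := by
        rw [hwb]
        field_simp
      rw [heq]
      exact hliminf
  · exact hlimsup
end
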